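/- arXiv:1109.4661 — 5 statements merged into one kernel-verified Lean document; each statement's English description precedes it below -/
import Mathlib

section
/- Fix ε > 0 and real numbers a_1, a_2, a_3, b_1, b_2, b_3, c with a_i > −1−ε and b_i > −1−ε for i = 1,2,3 and a_2 + b_2 + c > −2−ε. Then there is a constant C such that for all real v_1 < v_2 < v_3 with v_3 − v_2 > v_2 − v_1, ∫_{v_1}^{v_2} ∫_{v_2}^{v_3} |1+i(u_1−u_2)|^c ∏_{i=1}^{3} |1+i(u_1−v_i)|^{a_i} |1+i(u_2−v_i)|^{b_i} du_2 du_1 ≤ C |1+i(v_3−v_1)|^{(κ−δ)/2+ε} |1+i(v_3−v_2)|^{(κ−δ)/2+ε} |1+i(v_2−v_1)|^{δ+ε}, where κ = a_1+a_2+a_3+b_1+b_2+b_3+c+2 and δ = min( a_1+a_2+1, a_1+a_2+b_1+c+1 ). -/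
/-!
Put `x = |u₁ - v₂|`, `y = |u₂ - v₂|`, `d₁ = v₂ - v₁ ≤ d₂ = v₃ - v₂`, and replace every
`|1 + i t|` by the comparable `1 + |t|`. Only the factors `(1 + x + y) ^ c` (from `u₁ - u₂`) and
`(1 + y + d₁) ^ b₁` (from `u₂ - v₁`) couple the two variables. Depending on the signs of `c` and
`b₁`, their product is bounded by two monomials in `1 + x`, `1 + y`, `1 + d₁`, `1 + d₂`; for `c < 0`
this splits `c` between the `x`- and the `y`-exponent, which `a₂ + b₂ + c > -2 - ε` makes possible.
The resulting integrals factor into one-dimensional ones,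
`∫ u in α..β, (1 + |u - α|) ^ p * (1 + |u - β|) ^ q ≲ (1 + (β - α)) ^ (p + q + 1 + ε)` for
`p, q > -1 - ε`, and since `d₁ ≤ d₂`, a surplus power of `1 + d₁` can be moved onto `1 + d₂`.
-/

open MeasureTheory Set

noncomputable section

namespace BracketIntegral

lemma rpow_le_two_rpow_abs_mul_rpow {A W : ℝ} (hA : 0 < A) (hW : 0 < W) (h₁ : A ≤ 2 * W)
    (h₂ : W ≤ 2 * A) (e : ℝ) : W ^ e ≤ 2 ^ |e| * A ^ e := by
  rcases le_total 0 e with he | he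
  · calc W ^ e ≤ (2 * A) ^ e := by gcongr
      _ = 2 ^ |e| * A ^ e := by rw [abs_of_nonneg he, Real.mul_rpow zero_le_two hA.le]
  · calc W ^ e ≤ (2⁻¹ * A) ^ e := Real.rpow_le_rpow_of_nonpos (by positivity) (by linarith) he
      _ = 2 ^ |e| * A ^ e := by
        rw [abs_of_nonpos he, Real.mul_rpow (by norm_num) hA.le, Real.inv_rpow zero_le_two,
          Real.rpow_neg zero_le_two]

abbrev bracket (t : ℝ) : ℝ := ‖1 + Complex.I * (t : ℂ)‖

lemma bracket_le_one_add_abs (t : ℝ) : bracket t ≤ 1 + |t| := by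
  calc bracket t ≤ ‖(1 : ℂ)‖ + ‖Complex.I * (t : ℂ)‖ := norm_add_le _ _
    _ = 1 + |t| := by simp

lemma one_add_abs_le_two_mul_bracket (t : ℝ) : 1 + |t| ≤ 2 * bracket t := by
  have hre := Complex.abs_re_le_norm (1 + Complex.I * (t : ℂ))
  have him := Complex.abs_im_le_norm (1 + Complex.I * (t : ℂ))
  simp only [Complex.add_re, Complex.one_re, Complex.mul_re, Complex.I_re, Complex.I_im,
    Complex.ofReal_re, Complex.ofReal_im, Complex.add_im, Complex.one_im, Complex.mul_im] at hre him
  norm_num at hre him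
  unfold bracket
  linarith

lemma bracket_pos (t : ℝ) : 0 < bracket t := by
  linarith [one_add_abs_le_two_mul_bracket t, abs_nonneg t]

lemma bracket_rpow_le (t e : ℝ) : bracket t ^ e ≤ 2 ^ |e| * (1 + |t|) ^ e :=
  rpow_le_two_rpow_abs_mul_rpow (by positivity) (bracket_pos t)
    (one_add_abs_le_two_mul_bracket t) (by linarith [bracket_le_one_add_abs t, abs_nonneg t]) e

lemma one_add_abs_rpow_le {s t : ℝ} (h₁ : |s| ≤ |t|) (h₂ : |t| ≤ 2 * |s|) (e : ℝ) :
    (1 + |s|) ^ e ≤ 2 ^ |e| * bracket t ^ e :=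
  rpow_le_two_rpow_abs_mul_rpow (bracket_pos t) (by positivity)
    (by linarith [bracket_le_one_add_abs t]) (by linarith [one_add_abs_le_two_mul_bracket t]) e

@[fun_prop]
lemma Continuous.bracket_rpow {X : Type*} [TopologicalSpace X] {f : X → ℝ} (hf : Continuous f)
    (e : ℝ) : Continuous fun x => bracket (f x) ^ e :=
  ((by unfold bracket; fun_prop : Continuous bracket).comp hf).rpow_const
    fun x => Or.inl (bracket_pos _).ne'

@[fun_prop]
lemma Continuous.one_add_abs_rpow {X : Type*} [TopologicalSpace X] {f : X → ℝ}
    (hf : Continuous f) (e : ℝ) : Continuous fun x => (1 + |f x|) ^ e :=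
  (by fun_prop : Continuous fun x => 1 + |f x|).rpow_const fun x => Or.inl (by positivity)

lemma rpow_mul_rpow_le_rpow_mul_rpow {Z X E₁ E₂ T₁ T₂ : ℝ} (hZ : 1 ≤ Z) (hZX : Z ≤ X)
    (h₂ : E₂ ≤ T₂) (h : E₁ + E₂ ≤ T₁ + T₂) : Z ^ E₁ * X ^ E₂ ≤ Z ^ T₁ * X ^ T₂ := by
  have hX : 1 ≤ X := hZ.trans hZX
  rcases le_total E₁ T₁ with h₁ | h₁
  · gcongr
  · -- move the excess `E₁ - T₁` of the small base onto the large one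
    calc Z ^ E₁ * X ^ E₂ = Z ^ T₁ * Z ^ (E₁ - T₁) * X ^ E₂ := by
          rw [← Real.rpow_add (by linarith)]; ring_nf
      _ ≤ Z ^ T₁ * X ^ (E₁ - T₁) * X ^ E₂ := by gcongr
      _ = Z ^ T₁ * X ^ (E₁ - T₁ + E₂) := by rw [Real.rpow_add (by linarith)]; ring
      _ ≤ Z ^ T₁ * X ^ T₂ := by gcongr; linarith

lemma integral_one_add_abs_sub_rpow_le {α m r : ℝ} (hr : -1 < r) (hαm : α ≤ m) :
    ∫ u in α..m, (1 + |u - α|) ^ r ≤ (1 + (m - α)) ^ (r + 1) / (r + 1) := by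
  have hshift : ∫ u in α..m, (1 + |u - α|) ^ r = ∫ u in α..m, (u + (1 - α)) ^ r := by
    refine intervalIntegral.integral_congr fun u hu => ?_
    rw [uIcc_of_le hαm] at hu
    simp only [abs_of_nonneg (sub_nonneg.2 hu.1)]
    ring_nf
  rw [hshift, intervalIntegral.integral_comp_add_right (· ^ r), integral_rpow (Or.inl hr),
    show α + (1 - α) = 1 by ring, Real.one_rpow, show m + (1 - α) = 1 + (m - α) by ring]
  exact div_le_div_of_nonneg_right (by linarith) (by linarith)

def twoPointWeight (α β p q u : ℝ) : ℝ := (1 + |u - α|) ^ p * (1 + |u - β|) ^ q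

lemma continuous_twoPointWeight (α β p q : ℝ) : Continuous (twoPointWeight α β p q) := by
  unfold twoPointWeight; fun_prop

lemma integral_twoPointWeight_left_half_le {ε p q α β : ℝ} (hε : 0 < ε) (hp : -1 - ε < p)
    (hαβ : α ≤ β) :
    ∫ u in α..(α + β) / 2, twoPointWeight α β p q u ≤
      2 ^ |q| / (p + 1 + ε) * (1 + (β - α)) ^ (p + q + 1 + ε) := by
  have hD : 0 < 1 + (β - α) := by linarith
  -- on the left half, `1 + |u - β|` is comparable to `1 + (β - α)`
  have hpt : ∀ u ∈ Icc α ((α + β) / 2),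
      twoPointWeight α β p q u ≤ 2 ^ |q| * (1 + (β - α)) ^ q * (1 + |u - α|) ^ (p + ε) := by
    rintro u ⟨hαu, huβ⟩
    have hβ : (1 + |u - β|) ^ q ≤ 2 ^ |q| * (1 + (β - α)) ^ q := by
      rw [abs_of_nonpos (by linarith)]
      exact rpow_le_two_rpow_abs_mul_rpow hD (by linarith) (by linarith) (by linarith) q
    calc twoPointWeight α β p q u ≤ (1 + |u - α|) ^ (p + ε) * (2 ^ |q| * (1 + (β - α)) ^ q) := by
          unfold twoPointWeight
          gcongr
          · linarith [abs_nonneg (u - α)]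
          · linarith
      _ = _ := by ring
  have hint : ∫ u in α..(α + β) / 2, (1 + |u - α|) ^ (p + ε) ≤
      (1 + (β - α)) ^ (p + ε + 1) / (p + ε + 1) :=
    (integral_one_add_abs_sub_rpow_le (by linarith) (by linarith)).trans
      (div_le_div_of_nonneg_right (by gcongr <;> linarith) (by linarith))
  calc ∫ u in α..(α + β) / 2, twoPointWeight α β p q u
      ≤ ∫ u in α..(α + β) / 2, 2 ^ |q| * (1 + (β - α)) ^ q * (1 + |u - α|) ^ (p + ε) :=
        intervalIntegral.integral_mono_on (by linarith)
          ((continuous_twoPointWeight _ _ _ _).intervalIntegrable _ _)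
          ((by fun_prop : Continuous fun u => 2 ^ |q| * (1 + (β - α)) ^ q *
            (1 + |u - α|) ^ (p + ε)).intervalIntegrable _ _) hpt
    _ ≤ 2 ^ |q| * (1 + (β - α)) ^ q * ((1 + (β - α)) ^ (p + ε + 1) / (p + ε + 1)) := by
        rw [intervalIntegral.integral_const_mul]; gcongr
    _ = _ := by
        rw [show p + q + 1 + ε = q + (p + ε + 1) by ring, Real.rpow_add hD q]; ring

lemma exists_integral_twoPointWeight_le {ε p q : ℝ} (hε : 0 < ε) (hp : -1 - ε < p)
    (hq : -1 - ε < q) : ∃ C, 0 ≤ C ∧ ∀ α β, α ≤ β →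
      ∫ u in α..β, twoPointWeight α β p q u ≤ C * (1 + |β - α|) ^ (p + q + 1 + ε) := by
  refine ⟨2 ^ |q| / (p + 1 + ε) + 2 ^ |p| / (q + 1 + ε),
    add_nonneg (div_nonneg (by positivity) (by linarith))
      (div_nonneg (by positivity) (by linarith)), fun α β hαβ => ?_⟩
  have hint := fun a b => (continuous_twoPointWeight α β p q).intervalIntegrable (μ := volume) a b
  -- the reflection `u ↦ α + β - u` swaps the roles of the two endpoints
  have hreflect : ∫ u in (α + β) / 2..β, twoPointWeight α β p q u =
      ∫ u in α..(α + β) / 2, twoPointWeight α β q p u := by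
    have h := intervalIntegral.integral_comp_sub_left (twoPointWeight α β p q) (α + β)
      (a := α) (b := (α + β) / 2)
    rw [show α + β - (α + β) / 2 = (α + β) / 2 by ring, show α + β - α = β by ring] at h
    rw [← h]
    refine intervalIntegral.integral_congr fun u _ => ?_
    simp only [twoPointWeight, show α + β - u - α = -(u - β) by ring,
      show α + β - u - β = -(u - α) by ring, abs_neg, mul_comm]
  rw [← intervalIntegral.integral_add_adjacent_intervals (hint _ _) (hint _ _), hreflect,
    abs_of_nonneg (sub_nonneg.2 hαβ), add_mul]
  gcongr
  · exact integral_twoPointWeight_left_half_le hε hp hαβ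
  · rw [show p + q + 1 + ε = q + p + 1 + ε by ring]
    exact integral_twoPointWeight_left_half_le hε hq hαβ

lemma integral_integral_le_of_le_add {a b c d : ℝ} (hab : a ≤ b) (hcd : c ≤ d) {F : ℝ → ℝ → ℝ}
    (hF : Continuous F.uncurry) {f₁ f₂ g₁ g₂ : ℝ → ℝ} (hf₁ : Continuous f₁) (hf₂ : Continuous f₂)
    (hg₁ : Continuous g₁) (hg₂ : Continuous g₂) (k₁ k₂ : ℝ)
    (h : ∀ x ∈ Icc a b, ∀ y ∈ Icc c d, F x y ≤ k₁ * (f₁ x * g₁ y) + k₂ * (f₂ x * g₂ y)) :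
    ∫ x in a..b, ∫ y in c..d, F x y ≤
      k₁ * ((∫ x in a..b, f₁ x) * ∫ y in c..d, g₁ y) +
        k₂ * ((∫ x in a..b, f₂ x) * ∫ y in c..d, g₂ y) := by
  have hG : ∀ x, Continuous fun y => k₁ * (f₁ x * g₁ y) + k₂ * (f₂ x * g₂ y) := by
    intro x; fun_prop
  calc ∫ x in a..b, ∫ y in c..d, F x y
      ≤ ∫ x in a..b, (k₁ * ∫ y in c..d, g₁ y) * f₁ x + (k₂ * ∫ y in c..d, g₂ y) * f₂ x := by
        refine intervalIntegral.integral_mono_on hab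
          ((intervalIntegral.continuous_parametric_intervalIntegral_of_continuous' hF c d)
            |>.intervalIntegrable _ _)
          ((by fun_prop : Continuous fun x => (k₁ * ∫ y in c..d, g₁ y) * f₁ x +
            (k₂ * ∫ y in c..d, g₂ y) * f₂ x).intervalIntegrable _ _) fun x hx => ?_
        refine (intervalIntegral.integral_mono_on hcd ((hF.uncurry_left x).intervalIntegrable _ _)
          ((hG x).intervalIntegrable _ _) (h x hx)).trans_eq ?_
        rw [intervalIntegral.integral_add ((by fun_prop : Continuous fun y => k₁ * (f₁ x * g₁ y))
            |>.intervalIntegrable _ _)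
            ((by fun_prop : Continuous fun y => k₂ * (f₂ x * g₂ y)).intervalIntegrable _ _),
          intervalIntegral.integral_const_mul, intervalIntegral.integral_const_mul,
          intervalIntegral.integral_const_mul, intervalIntegral.integral_const_mul]
        ring
    _ = _ := by
        rw [intervalIntegral.integral_add ((hf₁.const_mul _).intervalIntegrable _ _)
            ((hf₂.const_mul _).intervalIntegrable _ _),
          intervalIntegral.integral_const_mul, intervalIntegral.integral_const_mul]
        ring

lemma add_rpow_le_two_rpow_mul_add {A B e : ℝ} (hA : 0 ≤ A) (hB : 0 ≤ B) (he : 0 ≤ e) :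
    (A + B) ^ e ≤ 2 ^ e * (A ^ e + B ^ e) := by
  have hA' := Real.rpow_nonneg hA e
  have hB' := Real.rpow_nonneg hB e
  rcases le_total A B with h | h
  · calc (A + B) ^ e ≤ (2 * B) ^ e := by gcongr; linarith
      _ ≤ 2 ^ e * (A ^ e + B ^ e) := by rw [Real.mul_rpow zero_le_two hB]; gcongr; linarith
  · calc (A + B) ^ e ≤ (2 * A) ^ e := by gcongr; linarith
      _ ≤ 2 ^ e * (A ^ e + B ^ e) := by rw [Real.mul_rpow zero_le_two hA]; gcongr; linarith

lemma one_add_add_rpow_le {s t e : ℝ} (hs : 0 ≤ s) (ht : 0 ≤ t) (he : 0 ≤ e) :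
    (1 + (s + t)) ^ e ≤ 2 ^ e * ((1 + s) ^ e + (1 + t) ^ e) :=
  (Real.rpow_le_rpow (by linarith) (by linarith) he).trans
    (add_rpow_le_two_rpow_mul_add (by linarith) (by linarith) he)

lemma one_add_add_rpow_add_le {s t p q : ℝ} (hs : 0 ≤ s) (ht : 0 ≤ t) (hp : p ≤ 0) (hq : q ≤ 0) :
    (1 + (s + t)) ^ (p + q) ≤ (1 + s) ^ p * (1 + t) ^ q := by
  rw [Real.rpow_add (by linarith)]
  exact mul_le_mul (Real.rpow_le_rpow_of_nonpos (by linarith) (by linarith) hp)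
    (Real.rpow_le_rpow_of_nonpos (by linarith) (by linarith) hq) (Real.rpow_nonneg (by linarith) _)
    (Real.rpow_nonneg (by linarith) _)

structure Monomial where
  x : ℝ
  y : ℝ
  d₁ : ℝ
  d₂ : ℝ

namespace Monomial

def eval (m : Monomial) (x y d₁ d₂ : ℝ) : ℝ :=
  (1 + |x|) ^ m.x * (1 + |y|) ^ m.y * (1 + |d₁|) ^ m.d₁ * (1 + |d₂|) ^ m.d₂

/-- The first two conditions are the hypotheses of the one-dimensional bound for the `u₁`- and the
`u₂`-integral; the last two make the resulting powers of `1 + d₁` and `1 + d₂` fit the target. -/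
structure Admissible (ε a₂ b₁ b₂ c : ℝ) (m : Monomial) : Prop where
  lt_add_x : -1 - ε < a₂ + m.x
  lt_add_y : -1 - ε < b₂ + m.y
  y_add_d₂_le : m.y + m.d₂ ≤ max (b₁ + c) 0
  sum_le : m.x + m.y + m.d₁ + m.d₂ ≤ b₁ + c

end Monomial

/-- With `x = u₁ - v₂`, `y = u₂ - v₂`, `d₁ = v₂ - v₁`, `d₂ = v₃ - v₂`, the left side is the part
`bracket (u₁ - u₂) ^ c * bracket (u₂ - v₁) ^ b₁` of the integrand coupling `u₁` and `u₂`, with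
`bracket t` replaced by `1 + |t|`. -/
def Dominates (c b₁ K : ℝ) (m m' : Monomial) : Prop :=
  ∀ x y d₁ d₂ : ℝ, |y| ≤ |d₂| → |d₁| ≤ |d₂| →
    (1 + (|x| + |y|)) ^ c * (1 + (|y| + |d₁|)) ^ b₁ ≤ K * (m.eval x y d₁ d₂ + m'.eval x y d₁ d₂)

lemma dominates_of_nonneg_of_nonneg {c b₁ : ℝ} (hc : 0 ≤ c) (hb₁ : 0 ≤ b₁) :
    Dominates c b₁ (2 ^ c * 2 ^ b₁) ⟨c, 0, 0, b₁⟩ ⟨0, c, 0, b₁⟩ := by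
  intro x y d₁ d₂ hy hd
  simp only [Monomial.eval, Real.rpow_zero, mul_one, one_mul]
  have hd₂ : (1 + (|y| + |d₁|)) ^ b₁ ≤ 2 ^ b₁ * (1 + |d₂|) ^ b₁ := by
    rw [← Real.mul_rpow zero_le_two (by positivity)]; gcongr; linarith
  calc (1 + (|x| + |y|)) ^ c * (1 + (|y| + |d₁|)) ^ b₁
      ≤ 2 ^ c * ((1 + |x|) ^ c + (1 + |y|) ^ c) * (2 ^ b₁ * (1 + |d₂|) ^ b₁) := by
        gcongr
        exact one_add_add_rpow_le (abs_nonneg _) (abs_nonneg _) hc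
    _ = _ := by ring

lemma dominates_of_nonneg_of_nonpos {c b₁ : ℝ} (hc : 0 ≤ c) (hb₁ : b₁ ≤ 0) :
    Dominates c b₁ (2 ^ c) ⟨c, 0, b₁, 0⟩ ⟨0, max (b₁ + c) 0, min (b₁ + c) 0, 0⟩ := by
  intro x y d₁ d₂ _ _
  simp only [Monomial.eval, Real.rpow_zero, mul_one, one_mul]
  have hd₁ : (1 + (|y| + |d₁|)) ^ b₁ ≤ (1 + |d₁|) ^ b₁ :=
    Real.rpow_le_rpow_of_nonpos (by positivity) (by linarith [abs_nonneg y]) hb₁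
  -- split `b₁ = (max (b₁ + c) 0 - c) + min (b₁ + c) 0` into two nonpositive exponents
  have hy : (1 + |y|) ^ c * (1 + (|y| + |d₁|)) ^ b₁ ≤
      (1 + |y|) ^ max (b₁ + c) 0 * (1 + |d₁|) ^ min (b₁ + c) 0 := by
    have hsplit := one_add_add_rpow_add_le (abs_nonneg y) (abs_nonneg d₁)
      (p := max (b₁ + c) 0 - c) (q := min (b₁ + c) 0) (by simp [hb₁, hc]) (min_le_right _ _)
    rw [show max (b₁ + c) 0 - c + min (b₁ + c) 0 = b₁ by linarith [min_add_max (b₁ + c) 0]]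
      at hsplit
    calc (1 + |y|) ^ c * (1 + (|y| + |d₁|)) ^ b₁
        ≤ (1 + |y|) ^ c * ((1 + |y|) ^ (max (b₁ + c) 0 - c) * (1 + |d₁|) ^ min (b₁ + c) 0) := by
          gcongr
      _ = _ := by rw [← mul_assoc, ← Real.rpow_add (by positivity), add_sub_cancel]
  calc (1 + (|x| + |y|)) ^ c * (1 + (|y| + |d₁|)) ^ b₁
      ≤ 2 ^ c * ((1 + |x|) ^ c + (1 + |y|) ^ c) * (1 + (|y| + |d₁|)) ^ b₁ := by
        gcongr
        exact one_add_add_rpow_le (abs_nonneg _) (abs_nonneg _) hc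
    _ = 2 ^ c * ((1 + |x|) ^ c * (1 + (|y| + |d₁|)) ^ b₁ +
          (1 + |y|) ^ c * (1 + (|y| + |d₁|)) ^ b₁) := by ring
    _ ≤ _ := by gcongr

lemma dominates_of_nonpos_of_nonpos {c b₁ p q : ℝ} (hp : p ≤ 0) (hq : q ≤ 0) (hpq : p + q = c)
    (hb₁ : b₁ ≤ 0) : Dominates c b₁ 1 ⟨p, q, b₁, 0⟩ ⟨p, q, b₁, 0⟩ := by
  intro x y d₁ d₂ _ _
  simp only [Monomial.eval, Real.rpow_zero, mul_one, one_mul, ← hpq]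
  have hd₁ : (1 + (|y| + |d₁|)) ^ b₁ ≤ (1 + |d₁|) ^ b₁ :=
    Real.rpow_le_rpow_of_nonpos (by positivity) (by linarith [abs_nonneg y]) hb₁
  have hxy := one_add_add_rpow_add_le (abs_nonneg x) (abs_nonneg y) hp hq
  calc (1 + (|x| + |y|)) ^ (p + q) * (1 + (|y| + |d₁|)) ^ b₁
      ≤ (1 + |x|) ^ p * (1 + |y|) ^ q * (1 + |d₁|) ^ b₁ := by gcongr
    _ ≤ _ := by
        have : 0 ≤ (1 + |x|) ^ p * (1 + |y|) ^ q * (1 + |d₁|) ^ b₁ := by positivity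
        linarith

lemma dominates_of_nonpos_of_nonneg {c b₁ p q p' q' : ℝ} (hp : p ≤ 0) (hq : q ≤ 0)
    (hpq : p + q = c) (hp' : p' ≤ 0) (hq' : q' ≤ 0) (hpq' : p' + q' = c) (hb₁ : 0 ≤ b₁) :
    Dominates c b₁ (2 ^ b₁) ⟨p, q + b₁, 0, 0⟩ ⟨p', q', b₁, 0⟩ := by
  intro x y d₁ d₂ _ _
  simp only [Monomial.eval, Real.rpow_zero, mul_one, Real.rpow_add (by positivity : 0 < 1 + |y|)]
  have hyd₁ := one_add_add_rpow_le (abs_nonneg y) (abs_nonneg d₁) hb₁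
  have hxy := one_add_add_rpow_add_le (abs_nonneg x) (abs_nonneg y) hp hq
  have hxy' := one_add_add_rpow_add_le (abs_nonneg x) (abs_nonneg y) hp' hq'
  rw [hpq] at hxy
  rw [hpq'] at hxy'
  calc (1 + (|x| + |y|)) ^ c * (1 + (|y| + |d₁|)) ^ b₁
      ≤ (1 + (|x| + |y|)) ^ c * (2 ^ b₁ * ((1 + |y|) ^ b₁ + (1 + |d₁|) ^ b₁)) := by gcongr
    _ = 2 ^ b₁ * ((1 + (|x| + |y|)) ^ c * (1 + |y|) ^ b₁ +
          (1 + (|x| + |y|)) ^ c * (1 + |d₁|) ^ b₁) := by ring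
    _ ≤ 2 ^ b₁ * ((1 + |x|) ^ p * (1 + |y|) ^ q * (1 + |y|) ^ b₁ +
          (1 + |x|) ^ p' * (1 + |y|) ^ q' * (1 + |d₁|) ^ b₁) := by gcongr
    _ = _ := by ring

lemma exists_exponent_split {L a b c c' : ℝ} (hc' : c' ≤ 0) (ha : L < a) (hb : L < b + c - c')
    (habc : 2 * L < a + b + c) : ∃ p, c' ≤ p ∧ p ≤ 0 ∧ L < a + p ∧ L < b + (c - p) := by
  obtain ⟨m, hm₁, hm₂⟩ :=
    exists_between (show max (L - a) c' < b + c - L from max_lt (by linarith) (by linarith))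
  have := le_max_left (L - a) c'
  have := le_max_right (L - a) c'
  refine ⟨min 0 m, le_min hc' (by linarith), min_le_left _ _, ?_, by linarith [min_le_right 0 m]⟩
  rcases min_cases 0 m with h | h <;> linarith

theorem exists_dominates {ε a₂ b₁ b₂ c : ℝ} (ha₂ : -1 - ε < a₂) (hb₂ : -1 - ε < b₂)
    (habc : -2 - 2 * ε < a₂ + b₂ + c) :
    ∃ K, 0 ≤ K ∧ ∃ m m' : Monomial, m.Admissible ε a₂ b₁ b₂ c ∧ m'.Admissible ε a₂ b₁ b₂ c ∧
      Dominates c b₁ K m m' := by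
  have := min_add_max (b₁ + c) 0
  have := le_max_left (b₁ + c) 0
  have := le_max_right (b₁ + c) 0
  rcases le_total 0 c with hc | hc <;> rcases le_total 0 b₁ with hb₁ | hb₁
  · refine ⟨_, by positivity, _, _, ⟨?_, ?_, ?_, ?_⟩, ⟨?_, ?_, ?_, ?_⟩,
      dominates_of_nonneg_of_nonneg hc hb₁⟩ <;> dsimp only <;> linarith
  · refine ⟨_, by positivity, _, _, ⟨?_, ?_, ?_, ?_⟩, ⟨?_, ?_, ?_, ?_⟩,
      dominates_of_nonneg_of_nonpos hc hb₁⟩ <;> dsimp only <;> linarith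
  · have : c ≤ min (b₁ + c) 0 := le_min (by linarith) hc
    obtain ⟨p, hp, hp₀, hpa, hpb⟩ := exists_exponent_split (L := -1 - ε) (c := c) (b := b₂ + b₁)
      (min_le_right (b₁ + c) 0) ha₂ (by linarith) (by linarith)
    obtain ⟨p', hp', hp'₀, hpa', hpb'⟩ := exists_exponent_split (L := -1 - ε) (c := c) (b := b₂)
      hc ha₂ (by linarith) (by linarith)
    refine ⟨_, by positivity, _, _, ⟨?_, ?_, ?_, ?_⟩, ⟨?_, ?_, ?_, ?_⟩,
      dominates_of_nonpos_of_nonneg hp₀ (q := c - p) (by linarith) (by ring) hp'₀ (q' := c - p')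
        (by linarith) (by ring) hb₁⟩ <;> dsimp only <;> linarith
  · obtain ⟨p, hp, hp₀, hpa, hpb⟩ := exists_exponent_split (L := -1 - ε) (c := c) (b := b₂)
      hc ha₂ (by linarith) (by linarith)
    refine ⟨1, zero_le_one, _, _, ⟨?_, ?_, ?_, ?_⟩, ⟨?_, ?_, ?_, ?_⟩,
      dominates_of_nonpos_of_nonpos hp₀ (q := c - p) (by linarith) (by ring) hb₁⟩ <;>
      dsimp only <;> linarith

/-- The integrand of the theorem, with `w t` in place of `bracket t`. -/
def kernel (w : ℝ → ℝ) (a₁ a₂ a₃ b₁ b₂ b₃ c v₁ v₂ v₃ u₁ u₂ : ℝ) : ℝ :=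
  w (u₁ - u₂) ^ c * (w (u₁ - v₁) ^ a₁ * w (u₁ - v₂) ^ a₂ * w (u₁ - v₃) ^ a₃) *
    (w (u₂ - v₁) ^ b₁ * w (u₂ - v₂) ^ b₂ * w (u₂ - v₃) ^ b₃)

lemma continuous_kernel_bracket (a₁ a₂ a₃ b₁ b₂ b₃ c v₁ v₂ v₃ : ℝ) :
    Continuous (Function.uncurry (kernel bracket a₁ a₂ a₃ b₁ b₂ b₃ c v₁ v₂ v₃)) := by
  unfold kernel Function.uncurry; fun_prop

lemma kernel_bracket_le (a₁ a₂ a₃ b₁ b₂ b₃ c v₁ v₂ v₃ u₁ u₂ : ℝ) :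
    kernel bracket a₁ a₂ a₃ b₁ b₂ b₃ c v₁ v₂ v₃ u₁ u₂ ≤
      2 ^ (|a₁| + |a₂| + |a₃| + |b₁| + |b₂| + |b₃| + |c|) *
        kernel (fun t => 1 + |t|) a₁ a₂ a₃ b₁ b₂ b₃ c v₁ v₂ v₃ u₁ u₂ := by
  unfold kernel
  calc _ ≤ 2 ^ |c| * (1 + |u₁ - u₂|) ^ c *
        (2 ^ |a₁| * (1 + |u₁ - v₁|) ^ a₁ * (2 ^ |a₂| * (1 + |u₁ - v₂|) ^ a₂) *
          (2 ^ |a₃| * (1 + |u₁ - v₃|) ^ a₃)) *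
        (2 ^ |b₁| * (1 + |u₂ - v₁|) ^ b₁ * (2 ^ |b₂| * (1 + |u₂ - v₂|) ^ b₂) *
          (2 ^ |b₃| * (1 + |u₂ - v₃|) ^ b₃)) := by
        gcongr <;> exact bracket_rpow_le _ _
    _ = _ := by simp only [Real.rpow_add two_pos]; ring

lemma kernel_bracket_le_of_dominates {a₁ a₂ a₃ b₁ b₂ b₃ c K v₁ v₂ v₃ u₁ u₂ : ℝ}
    {m m' : Monomial} (hK : Dominates c b₁ K m m') (hu₁ : u₁ ∈ Icc v₁ v₂) (hu₂ : u₂ ∈ Icc v₂ v₃)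
    (hgap : v₂ - v₁ ≤ v₃ - v₂) :
    kernel bracket a₁ a₂ a₃ b₁ b₂ b₃ c v₁ v₂ v₃ u₁ u₂ ≤
      2 ^ (|a₁| + |a₂| + |a₃| + |b₁| + |b₂| + |b₃| + |c|) * 2 ^ |a₃| * K *
          (1 + |v₂ - v₁|) ^ m.d₁ * (1 + |v₃ - v₂|) ^ (a₃ + m.d₂) *
          (twoPointWeight v₁ v₂ a₁ (a₂ + m.x) u₁ * twoPointWeight v₂ v₃ (b₂ + m.y) b₃ u₂) +
        2 ^ (|a₁| + |a₂| + |a₃| + |b₁| + |b₂| + |b₃| + |c|) * 2 ^ |a₃| * K *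
          (1 + |v₂ - v₁|) ^ m'.d₁ * (1 + |v₃ - v₂|) ^ (a₃ + m'.d₂) *
          (twoPointWeight v₁ v₂ a₁ (a₂ + m'.x) u₁ * twoPointWeight v₂ v₃ (b₂ + m'.y) b₃ u₂) := by
  obtain ⟨h₁, h₂⟩ := hu₁
  obtain ⟨h₃, h₄⟩ := hu₂
  have e₁ : |u₁ - u₂| = |u₁ - v₂| + |u₂ - v₂| := by
    rw [abs_of_nonpos (by linarith), abs_of_nonpos (by linarith), abs_of_nonneg (by linarith)]
    ring
  have e₂ : |u₂ - v₁| = |u₂ - v₂| + |v₂ - v₁| := by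
    rw [abs_of_nonneg (by linarith), abs_of_nonneg (by linarith), abs_of_nonneg (by linarith)]
    ring
  have hdom := hK (u₁ - v₂) (u₂ - v₂) (v₂ - v₁) (v₃ - v₂)
    (by rw [abs_of_nonneg (by linarith), abs_of_nonneg (by linarith)]; linarith)
    (by rw [abs_of_nonneg (by linarith), abs_of_nonneg (by linarith)]; exact hgap)
  have ha₃ : (1 + |u₁ - v₃|) ^ a₃ ≤ 2 ^ |a₃| * (1 + |v₃ - v₂|) ^ a₃ := by
    rw [abs_of_nonpos (by linarith : u₁ - v₃ ≤ 0), abs_of_nonneg (by linarith : 0 ≤ v₃ - v₂)]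
    exact rpow_le_two_rpow_abs_mul_rpow (by linarith) (by linarith) (by linarith) (by linarith) a₃
  refine (kernel_bracket_le ..).trans ?_
  simp only [kernel]
  rw [e₁, e₂]
  calc _ = 2 ^ (|a₁| + |a₂| + |a₃| + |b₁| + |b₂| + |b₃| + |c|) *
          ((1 + |u₁ - v₁|) ^ a₁ * (1 + |u₁ - v₂|) ^ a₂ * (1 + |u₁ - v₃|) ^ a₃ *
            ((1 + |u₂ - v₂|) ^ b₂ * (1 + |u₂ - v₃|) ^ b₃) *
            ((1 + (|u₁ - v₂| + |u₂ - v₂|)) ^ c * (1 + (|u₂ - v₂| + |v₂ - v₁|)) ^ b₁)) := by ring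
    _ ≤ 2 ^ (|a₁| + |a₂| + |a₃| + |b₁| + |b₂| + |b₃| + |c|) *
          ((1 + |u₁ - v₁|) ^ a₁ * (1 + |u₁ - v₂|) ^ a₂ * (2 ^ |a₃| * (1 + |v₃ - v₂|) ^ a₃) *
            ((1 + |u₂ - v₂|) ^ b₂ * (1 + |u₂ - v₃|) ^ b₃) *
            (K * (m.eval (u₁ - v₂) (u₂ - v₂) (v₂ - v₁) (v₃ - v₂) +
              m'.eval (u₁ - v₂) (u₂ - v₂) (v₂ - v₁) (v₃ - v₂)))) := by gcongr
    _ = _ := by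
        simp only [Monomial.eval, twoPointWeight, Real.rpow_add (by positivity : 0 < 1 + |u₁ - v₂|),
          Real.rpow_add (by positivity : 0 < 1 + |u₂ - v₂|),
          Real.rpow_add (by positivity : 0 < 1 + |v₃ - v₂|)]
        ring

theorem Monomial.Admissible.exists_integral_le {ε a₁ a₂ a₃ b₁ b₂ b₃ c T₁ T₂ : ℝ} {m : Monomial}
    (hm : m.Admissible ε a₂ b₁ b₂ c) (hε : 0 < ε) (ha₁ : -1 - ε < a₁) (hb₃ : -1 - ε < b₃)
    (hT₂ : a₃ + b₂ + b₃ + 1 + max (b₁ + c) 0 + ε ≤ T₂)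
    (hT : a₁ + a₂ + a₃ + b₁ + b₂ + b₃ + c + 2 + 2 * ε ≤ T₁ + T₂) :
    ∃ C, 0 ≤ C ∧ ∀ v₁ v₂ v₃, v₁ ≤ v₂ → v₂ ≤ v₃ → v₂ - v₁ ≤ v₃ - v₂ →
      (1 + |v₂ - v₁|) ^ m.d₁ * (1 + |v₃ - v₂|) ^ (a₃ + m.d₂) *
          ((∫ u in v₁..v₂, twoPointWeight v₁ v₂ a₁ (a₂ + m.x) u) *
            ∫ u in v₂..v₃, twoPointWeight v₂ v₃ (b₂ + m.y) b₃ u) ≤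
        C * ((1 + |v₂ - v₁|) ^ T₁ * (1 + |v₃ - v₂|) ^ T₂) := by
  obtain ⟨C₁, hC₁, hI₁⟩ := exists_integral_twoPointWeight_le hε ha₁ hm.lt_add_x
  obtain ⟨C₂, hC₂, hI₂⟩ := exists_integral_twoPointWeight_le hε hm.lt_add_y hb₃
  refine ⟨C₁ * C₂, mul_nonneg hC₁ hC₂, fun v₁ v₂ v₃ h₁₂ h₂₃ hgap => ?_⟩
  have hD : 1 + |v₂ - v₁| ≤ 1 + |v₃ - v₂| := by
    rw [abs_of_nonneg (by linarith), abs_of_nonneg (by linarith)]; linarith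
  have hpos : ∀ α β p q, α ≤ β → 0 ≤ ∫ u in α..β, twoPointWeight α β p q u :=
    fun α β p q h => intervalIntegral.integral_nonneg h fun u _ => by
      unfold twoPointWeight; positivity
  calc _ ≤ (1 + |v₂ - v₁|) ^ m.d₁ * (1 + |v₃ - v₂|) ^ (a₃ + m.d₂) *
        ((C₁ * (1 + |v₂ - v₁|) ^ (a₁ + (a₂ + m.x) + 1 + ε)) *
          (C₂ * (1 + |v₃ - v₂|) ^ (b₂ + m.y + b₃ + 1 + ε))) :=
        mul_le_mul_of_nonneg_left (mul_le_mul (hI₁ v₁ v₂ h₁₂) (hI₂ v₂ v₃ h₂₃) (hpos _ _ _ _ h₂₃)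
          ((hpos _ _ _ _ h₁₂).trans (hI₁ v₁ v₂ h₁₂))) (by positivity)
    _ = C₁ * C₂ * ((1 + |v₂ - v₁|) ^ (m.d₁ + (a₁ + (a₂ + m.x) + 1 + ε)) *
          (1 + |v₃ - v₂|) ^ (a₃ + m.d₂ + (b₂ + m.y + b₃ + 1 + ε))) := by
        rw [Real.rpow_add (by positivity) m.d₁, Real.rpow_add (by positivity) (a₃ + m.d₂)]; ring
    _ ≤ C₁ * C₂ * ((1 + |v₂ - v₁|) ^ T₁ * (1 + |v₃ - v₂|) ^ T₂) :=
        mul_le_mul_of_nonneg_left (rpow_mul_rpow_le_rpow_mul_rpow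
          (by linarith [abs_nonneg (v₂ - v₁)]) hD (by linarith [hm.y_add_d₂_le])
          (by linarith [hm.sum_le])) (mul_nonneg hC₁ hC₂)

theorem exists_integral_kernel_le {ε a₁ a₂ a₃ b₁ b₂ b₃ c T₁ T₂ : ℝ} (hε : 0 < ε)
    (ha₁ : -1 - ε < a₁) (ha₂ : -1 - ε < a₂) (hb₂ : -1 - ε < b₂) (hb₃ : -1 - ε < b₃)
    (habc : -2 - 2 * ε < a₂ + b₂ + c) (hT₂ : a₃ + b₂ + b₃ + 1 + max (b₁ + c) 0 + ε ≤ T₂)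
    (hT : a₁ + a₂ + a₃ + b₁ + b₂ + b₃ + c + 2 + 2 * ε ≤ T₁ + T₂) :
    ∃ C, 0 ≤ C ∧ ∀ v₁ v₂ v₃, v₁ ≤ v₂ → v₂ ≤ v₃ → v₂ - v₁ ≤ v₃ - v₂ →
      ∫ u₁ in v₁..v₂, ∫ u₂ in v₂..v₃, kernel bracket a₁ a₂ a₃ b₁ b₂ b₃ c v₁ v₂ v₃ u₁ u₂ ≤
        C * ((1 + |v₂ - v₁|) ^ T₁ * (1 + |v₃ - v₂|) ^ T₂) := by
  obtain ⟨K, hK, m, m', hm, hm', hdom⟩ := exists_dominates (b₁ := b₁) ha₂ hb₂ habc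
  obtain ⟨C, hC, hI⟩ := hm.exists_integral_le (a₃ := a₃) hε ha₁ hb₃ hT₂ hT
  obtain ⟨C', hC', hI'⟩ := hm'.exists_integral_le (a₃ := a₃) hε ha₁ hb₃ hT₂ hT
  have hA : 0 ≤ 2 ^ (|a₁| + |a₂| + |a₃| + |b₁| + |b₂| + |b₃| + |c|) * 2 ^ |a₃| * K := by
    positivity
  refine ⟨_ * (C + C'), mul_nonneg hA (add_nonneg hC hC'), fun v₁ v₂ v₃ h₁₂ h₂₃ hgap => ?_⟩
  refine (integral_integral_le_of_le_add h₁₂ h₂₃ (continuous_kernel_bracket ..)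
    (continuous_twoPointWeight v₁ v₂ a₁ (a₂ + m.x)) (continuous_twoPointWeight v₁ v₂ a₁ (a₂ + m'.x))
    (continuous_twoPointWeight v₂ v₃ (b₂ + m.y) b₃) (continuous_twoPointWeight v₂ v₃ (b₂ + m'.y) b₃)
    _ _ fun u₁ hu₁ u₂ hu₂ => kernel_bracket_le_of_dominates hdom hu₁ hu₂ hgap).trans ?_
  convert mul_le_mul_of_nonneg_left
    (add_le_add (hI v₁ v₂ v₃ h₁₂ h₂₃ hgap) (hI' v₁ v₂ v₃ h₁₂ h₂₃ hgap)) hA using 1 <;> ring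

end BracketIntegral

end

open BracketIntegral in
theorem statement9_general (ε a₁ a₂ a₃ b₁ b₂ b₃ c : ℝ) (hε : 0 < ε)
    (ha₁ : -1 - ε < a₁) (ha₂ : -1 - ε < a₂)
    (hb₂ : -1 - ε < b₂) (hb₃ : -1 - ε < b₃)
    (habc : -2 - ε < a₂ + b₂ + c) :
    ∃ C : ℝ, ∀ v₁ v₂ v₃ : ℝ, v₁ < v₂ → v₂ < v₃ → v₂ - v₁ < v₃ - v₂ →
      (∫ u₁ in v₁..v₂, ∫ u₂ in v₂..v₃,
          ‖1 + Complex.I * ((u₁ - u₂ : ℝ) : ℂ)‖ ^ c *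
            (‖1 + Complex.I * ((u₁ - v₁ : ℝ) : ℂ)‖ ^ a₁ *
              ‖1 + Complex.I * ((u₁ - v₂ : ℝ) : ℂ)‖ ^ a₂ *
              ‖1 + Complex.I * ((u₁ - v₃ : ℝ) : ℂ)‖ ^ a₃) *
            (‖1 + Complex.I * ((u₂ - v₁ : ℝ) : ℂ)‖ ^ b₁ *
              ‖1 + Complex.I * ((u₂ - v₂ : ℝ) : ℂ)‖ ^ b₂ *
              ‖1 + Complex.I * ((u₂ - v₃ : ℝ) : ℂ)‖ ^ b₃)) ≤
        C * ‖1 + Complex.I * ((v₃ - v₁ : ℝ) : ℂ)‖ ^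
              ((a₁ + a₂ + a₃ + b₁ + b₂ + b₃ + c + 2 -
                  min (a₁ + a₂ + 1) (a₁ + a₂ + b₁ + c + 1)) / 2 + ε) *
            ‖1 + Complex.I * ((v₃ - v₂ : ℝ) : ℂ)‖ ^
              ((a₁ + a₂ + a₃ + b₁ + b₂ + b₃ + c + 2 -
                  min (a₁ + a₂ + 1) (a₁ + a₂ + b₁ + c + 1)) / 2 + ε) *
            ‖1 + Complex.I * ((v₂ - v₁ : ℝ) : ℂ)‖ ^
              (min (a₁ + a₂ + 1) (a₁ + a₂ + b₁ + c + 1) + ε) := by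
  set δ := min (a₁ + a₂ + 1) (a₁ + a₂ + b₁ + c + 1) with hδ
  set τ := (a₁ + a₂ + a₃ + b₁ + b₂ + b₃ + c + 2 - δ) / 2 + ε with hτ
  have hδ' : δ + max (b₁ + c) 0 = a₁ + a₂ + b₁ + c + 1 := by
    rcases le_total (b₁ + c) 0 with h | h
    · rw [hδ, min_eq_right (by linarith), max_eq_right h]; ring
    · rw [hδ, min_eq_left (by linarith), max_eq_left h]; ring
  obtain ⟨C, hC, hI⟩ := exists_integral_kernel_le (a₃ := a₃) (b₁ := b₁) (c := c)
    (T₁ := δ + ε) (T₂ := τ + τ) hε ha₁ ha₂ hb₂ hb₃ (by linarith) (by linarith) (by linarith)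
  refine ⟨C * (2 ^ |τ| * 2 ^ |τ| * 2 ^ |δ + ε|), fun v₁ v₂ v₃ h₁₂ h₂₃ hgap => ?_⟩
  have h₁₃ : |v₃ - v₂| ≤ |v₃ - v₁| ∧ |v₃ - v₁| ≤ 2 * |v₃ - v₂| := by
    simp only [abs_of_pos (sub_pos.2 h₂₃), abs_of_pos (sub_pos.2 (h₁₂.trans h₂₃))]
    constructor <;> linarith
  calc _ ≤ C * ((1 + |v₂ - v₁|) ^ (δ + ε) * (1 + |v₃ - v₂|) ^ (τ + τ)) :=
        hI v₁ v₂ v₃ h₁₂.le h₂₃.le hgap.le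
    _ = C * ((1 + |v₃ - v₂|) ^ τ * (1 + |v₃ - v₂|) ^ τ * (1 + |v₂ - v₁|) ^ (δ + ε)) := by
        rw [Real.rpow_add (by positivity) τ τ]; ring
    _ ≤ C * ((2 ^ |τ| * bracket (v₃ - v₁) ^ τ) * (2 ^ |τ| * bracket (v₃ - v₂) ^ τ) *
          (2 ^ |δ + ε| * bracket (v₂ - v₁) ^ (δ + ε))) := by
        gcongr
        · exact one_add_abs_rpow_le h₁₃.1 h₁₃.2 τ
        · exact one_add_abs_rpow_le le_rfl (by linarith [abs_nonneg (v₃ - v₂)]) τ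
        · exact one_add_abs_rpow_le le_rfl (by linarith [abs_nonneg (v₂ - v₁)]) (δ + ε)
    _ = _ := by ring

/-- The elementary double-integral bound (Lemma on integrals of products of powers of
`|1 + i(u−v)|`). -/
theorem statement9 (ε a₁ a₂ a₃ b₁ b₂ b₃ c : ℝ) (hε : 0 < ε)
    (ha₁ : -1 - ε < a₁) (ha₂ : -1 - ε < a₂) (ha₃ : -1 - ε < a₃)
    (hb₁ : -1 - ε < b₁) (hb₂ : -1 - ε < b₂) (hb₃ : -1 - ε < b₃)
    (habc : -2 - ε < a₂ + b₂ + c) :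
    ∃ C : ℝ, ∀ v₁ v₂ v₃ : ℝ, v₁ < v₂ → v₂ < v₃ → v₂ - v₁ < v₃ - v₂ →
      (∫ u₁ in v₁..v₂, ∫ u₂ in v₂..v₃,
          ‖1 + Complex.I * ((u₁ - u₂ : ℝ) : ℂ)‖ ^ c *
            (‖1 + Complex.I * ((u₁ - v₁ : ℝ) : ℂ)‖ ^ a₁ *
              ‖1 + Complex.I * ((u₁ - v₂ : ℝ) : ℂ)‖ ^ a₂ *
              ‖1 + Complex.I * ((u₁ - v₃ : ℝ) : ℂ)‖ ^ a₃) *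
            (‖1 + Complex.I * ((u₂ - v₁ : ℝ) : ℂ)‖ ^ b₁ *
              ‖1 + Complex.I * ((u₂ - v₂ : ℝ) : ℂ)‖ ^ b₂ *
              ‖1 + Complex.I * ((u₂ - v₃ : ℝ) : ℂ)‖ ^ b₃)) ≤
        C * ‖1 + Complex.I * ((v₃ - v₁ : ℝ) : ℂ)‖ ^
              ((a₁ + a₂ + a₃ + b₁ + b₂ + b₃ + c + 2 -
                  min (a₁ + a₂ + 1) (a₁ + a₂ + b₁ + c + 1)) / 2 + ε) *
            ‖1 + Complex.I * ((v₃ - v₂ : ℝ) : ℂ)‖ ^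
              ((a₁ + a₂ + a₃ + b₁ + b₂ + b₃ + c + 2 -
                  min (a₁ + a₂ + 1) (a₁ + a₂ + b₁ + c + 1)) / 2 + ε) *
            ‖1 + Complex.I * ((v₂ - v₁ : ℝ) : ℂ)‖ ^
              (min (a₁ + a₂ + 1) (a₁ + a₂ + b₁ + c + 1) + ε) :=
  statement9_general ε a₁ a₂ a₃ b₁ b₂ b₃ c hε ha₁ ha₂ hb₂ hb₃ habc
end

section
/- For complex numbers u and t with −1 < Re(t) < −1 − 2Re(u), one has ∫_0^∞ (1+x^2)^u x^t dx = (1/2) B( (t+1)/2 , (−2u−t−1)/2 ), where the powers are principal branches (with 1+x^2 > 0 and x > 0 real) and B(z,w) = Γ(z)Γ(w)/Γ(z+w). -/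
/-!
Substituting `x = √y` turns the integral into `½ ∫₀^∞ (1+y)^(-(a+b)) y^(a-1) dy` with
`a = (t+1)/2` and `b = (-2u-t-1)/2`, and substituting `y = s/(1-s)` turns this beta integral of
the second kind into Euler's `∫₀¹ s^(a-1) (1-s)^(b-1) ds = Γ(a)Γ(b)/Γ(a+b)`, which holds because
the hypotheses say exactly `0 < Re a` and `0 < Re b`. The two substitutions need no integrability
assumptions: the change of variables formula also matches the junk values of non-integrable
integrands.
-/

open MeasureTheory

/-- The complex beta function `B(z,w) = Γ(z)Γ(w)/Γ(z+w)`. -/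
noncomputable def betaC (z w : ℂ) : ℂ := Complex.Gamma z * Complex.Gamma w / Complex.Gamma (z + w)

open Set Complex

lemma bijOn_div_one_sub_Ioo_Ioi :
    BijOn (fun s : ℝ => s / (1 - s)) (Ioo 0 1) (Ioi 0) := by
  refine InvOn.bijOn (f' := fun y : ℝ => y / (1 + y)) ⟨?_, ?_⟩ ?_ ?_
  · rintro s ⟨hs0, hs1⟩
    have : 1 - s ≠ 0 := by linarith
    field_simp
    ring
  · intro y (hy : 0 < y)
    have : 1 + y ≠ 0 := by linarith
    field_simp
    ring
  · rintro s ⟨hs0, hs1⟩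
    exact div_pos hs0 (sub_pos.mpr hs1)
  · intro y (hy : 0 < y)
    exact ⟨by positivity, (div_lt_one (by positivity)).mpr (by linarith)⟩

lemma hasDerivAt_div_one_sub {s : ℝ} (hs : s ≠ 1) :
    HasDerivAt (fun s : ℝ => s / (1 - s)) ((1 - s) ^ 2)⁻¹ s := by
  have hs' : 1 - s ≠ 0 := sub_ne_zero.mpr hs.symm
  refine ((hasDerivAt_id' s).fun_div ((hasDerivAt_id' s).const_sub 1) hs').congr_deriv ?_
  field_simp
  ring

lemma abs_deriv_smul_integrand_comp_div_one_sub {a b : ℂ} {s : ℝ} (hs : s ∈ Ioo (0 : ℝ) 1) :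
    |((1 - s) ^ 2)⁻¹| •
        (((1 + s / (1 - s) : ℝ) : ℂ) ^ (-(a + b)) * ((s / (1 - s) : ℝ) : ℂ) ^ (a - 1))
      = (s : ℂ) ^ (a - 1) * (1 - (s : ℂ)) ^ (b - 1) := by
  obtain ⟨hs0, hs1⟩ := hs
  have hq : 0 < 1 - s := sub_pos.mpr hs1
  have h1 : 1 + s / (1 - s) = (1 - s)⁻¹ := by field_simp; ring
  rw [h1, abs_of_pos (by positivity), ofReal_div, div_cpow_ofReal_nonneg hs0.le hq.le, ofReal_inv,
    inv_cpow_ofReal_nonneg hq.le, cpow_neg, inv_inv, real_smul, ofReal_inv, ofReal_pow]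
  rw [show 1 - (s : ℂ) = ((1 - s : ℝ) : ℂ) by push_cast; rfl]
  set q : ℂ := ((1 - s : ℝ) : ℂ)
  have hq0 : q ≠ 0 := ofReal_ne_zero.mpr hq.ne'
  have hqa : q ^ (a - 1) ≠ 0 := cpow_ne_zero_iff.mpr (Or.inl hq0)
  have hpow : q ^ (a + b) = q ^ (a - 1) * q ^ (b - 1) * q ^ 2 := by
    rw [← cpow_add _ _ hq0, ← cpow_natCast, ← cpow_add _ _ hq0]
    ring_nf
  rw [hpow]
  field_simp

theorem integral_Ioi_one_add_cpow_mul_cpow (a b : ℂ) :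
    ∫ y in Ioi (0 : ℝ), ((1 + y : ℝ) : ℂ) ^ (-(a + b)) * (y : ℂ) ^ (a - 1) = betaIntegral a b := by
  rw [← bijOn_div_one_sub_Ioo_Ioi.image_eq, integral_image_eq_integral_abs_deriv_smul
    measurableSet_Ioo (fun s hs => (hasDerivAt_div_one_sub hs.2.ne).hasDerivWithinAt)
    bijOn_div_one_sub_Ioo_Ioi.injOn, betaIntegral, intervalIntegral.integral_of_le zero_le_one,
    integral_Ioc_eq_integral_Ioo]
  exact setIntegral_congr_fun measurableSet_Ioo fun s hs =>
    abs_deriv_smul_integrand_comp_div_one_sub hs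

theorem integral_Ioi_comp_sq_mul_cpow (f : ℝ → ℂ) (t : ℂ) :
    ∫ x in Ioi (0 : ℝ), f (x ^ 2) * (x : ℂ) ^ t
      = (1 / 2) * ∫ y in Ioi (0 : ℝ), f y * (y : ℂ) ^ ((t - 1) / 2) := by
  rw [← integral_comp_rpow_Ioi_of_pos (g := fun y => f y * (y : ℂ) ^ ((t - 1) / 2)) two_pos,
    ← integral_const_mul]
  refine setIntegral_congr_fun measurableSet_Ioi fun x (hx : 0 < x) => ?_
  have hxC : (x : ℂ) ≠ 0 := ofReal_ne_zero.mpr hx.ne'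
  rw [← cpow_mul_ofReal_nonneg hx.le, Real.rpow_two, real_smul]
  push_cast
  rw [show (2 : ℂ) * ((t - 1) / 2) = t - 1 by ring, cpow_sub _ _ hxC, cpow_one]
  norm_num
  field_simp

/-- `∫₀^∞ (1+x²)^u x^t dx = ½ B((t+1)/2, (−2u−t−1)/2)` for `−1 < Re t < −1 − 2 Re u`. -/
theorem statement10 (u t : ℂ) (h1 : -1 < t.re) (h2 : t.re < -1 - 2 * u.re) :
    (∫ x in Set.Ioi (0 : ℝ), ((1 + x ^ 2 : ℝ) : ℂ) ^ u * ((x : ℝ) : ℂ) ^ t) =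
      (1 / 2) * betaC ((t + 1) / 2) ((-2 * u - t - 1) / 2) := by
  set a := (t + 1) / 2
  set b := (-2 * u - t - 1) / 2
  have ha : 0 < a.re := by simp only [a, div_ofNat_re, add_re, one_re]; linarith
  have hb : 0 < b.re := by
    simp only [b, neg_mul, div_ofNat_re, sub_re, neg_re, mul_re, re_ofNat, im_ofNat, one_re]
    linarith
  have hbeta := integral_Ioi_one_add_cpow_mul_cpow a b
  rw [show -(a + b) = u by ring, show a - 1 = (t - 1) / 2 by ring] at hbeta
  rw [integral_Ioi_comp_sq_mul_cpow (fun y => ((1 + y : ℝ) : ℂ) ^ u), hbeta,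
    betaIntegral_eq_Gamma_mul_div a b ha hb, betaC]
end

section
/- For every non-zero real x and every real c > 0, e^{2πix} = lim_{θ → (π/2)^−} (1/(2πi)) ∫_{Re(t) = c} |2πx|^{−t} e^{i t θ sign(x)} Γ(t) dt, where the integral is over the vertical line t = c + is, s ∈ ℝ, and for each fixed 0 < θ < π/2 the integral converges absolutely. -/
/-!
For `Re a > 0` the Mellin transform of `t ↦ e^{-at}` is `a^{-s} Γ(s)`: this is Euler's integral
for real `a`, and both sides are holomorphic in `a`. On the line `Re s = c` this transform is
integrable, because after the substitution `t = e^{-u}` it is the Fourier transform of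
`u ↦ e^{-cu} exp(-a e^{-u})`, whose first two derivatives are integrable. Mellin inversion then
gives `(1/2πi) ∫_{(c)} a^{-t} Γ(t) dt = e^{-a}`.

With `a(θ) = |2πx| e^{-iθ sign x}` the integrand of the theorem is `a(θ)^{-t} Γ(t)`, and
`Re a(θ) > 0` for `0 < θ < π/2`. As `θ → π/2` we have `a(θ) → -2πix`, so
`e^{-a(θ)} → e(x)`.
-/

open MeasureTheory Set Filter Topology Complex
open scoped Real FourierTransform

/-- e(x) = e^{2πix}. -/
noncomputable def e2pi (x : ℝ) : ℂ := Complex.exp (2 * Real.pi * Complex.I * x)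

lemma integrableOn_rpow_mul_exp_neg_mul {b r : ℝ} (hb : -1 < b) (hr : 0 < r) :
    IntegrableOn (fun t : ℝ => t ^ b * Real.exp (-r * t)) (Ioi 0) := by
  simpa only [Real.rpow_one] using integrableOn_rpow_mul_exp_neg_mul_rpow hb one_pos hr

section GammaIntegral

variable {s a : ℂ}

lemma norm_cpow_mul_cexp_neg_mul {t : ℝ} (ht : 0 < t) :
    ‖(t : ℂ) ^ s * cexp (-a * t)‖ = t ^ s.re * Real.exp (-a.re * t) := by
  simp [norm_cpow_eq_rpow_re_of_pos ht, Complex.norm_exp]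

lemma aestronglyMeasurable_cpow_mul_cexp_neg_mul :
    AEStronglyMeasurable (fun t : ℝ => (t : ℂ) ^ s * cexp (-a * t))
      (volume.restrict (Ioi 0)) := by
  refine ContinuousOn.aestronglyMeasurable (ContinuousOn.mul (fun t ht => ?_) (by fun_prop))
    measurableSet_Ioi
  exact ((continuousAt_cpow_const (ofReal_mem_slitPlane.2 ht)).comp
    continuous_ofReal.continuousAt).continuousWithinAt

lemma integrableOn_cpow_mul_cexp_neg_mul (hs : 0 < s.re) (ha : 0 < a.re) :
    IntegrableOn (fun t : ℝ => (t : ℂ) ^ (s - 1) * cexp (-a * t)) (Ioi 0) := by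
  refine Integrable.mono' (integrableOn_rpow_mul_exp_neg_mul (b := s.re - 1) (by linarith) ha)
    aestronglyMeasurable_cpow_mul_cexp_neg_mul ?_
  filter_upwards [ae_restrict_mem measurableSet_Ioi] with t ht
  rw [norm_cpow_mul_cexp_neg_mul ht, sub_re, one_re]

lemma hasDerivAt_cpow_mul_cexp_neg_mul {t : ℝ} (ht : 0 < t) :
    HasDerivAt (fun a : ℂ => (t : ℂ) ^ (s - 1) * cexp (-a * t))
      (-((t : ℂ) ^ s * cexp (-a * t))) a := by
  have h : HasDerivAt (fun a : ℂ => -a * t) (-t) a := by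
    simpa using (hasDerivAt_neg a).mul_const (t : ℂ)
  refine (h.cexp.const_mul _).congr_deriv ?_
  conv_rhs => rw [show s = (s - 1) + 1 by ring, cpow_add _ _ (ofReal_ne_zero.2 ht.ne'), cpow_one]
  ring

lemma differentiableOn_integral_cpow_mul_cexp_neg_mul (hs : 0 < s.re) :
    DifferentiableOn ℂ (fun a : ℂ => ∫ t : ℝ in Ioi 0, (t : ℂ) ^ (s - 1) * cexp (-a * t))
      {a : ℂ | 0 < a.re} := by
  intro a₀ (ha₀ : 0 < a₀.re)
  have hε : 0 < a₀.re / 2 := half_pos ha₀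
  have hre : ∀ a ∈ Metric.ball a₀ (a₀.re / 2), a₀.re / 2 ≤ a.re := fun a ha => by
    have := (abs_re_le_norm (a - a₀)).trans_lt (mem_ball_iff_norm.1 ha)
    rw [sub_re] at this
    linarith [(abs_lt.1 this).1]
  refine (hasDerivAt_integral_of_dominated_loc_of_deriv_le (Metric.ball_mem_nhds a₀ hε)
    (F := fun a (t : ℝ) => (t : ℂ) ^ (s - 1) * cexp (-a * t))
    (F' := fun a t => -((t : ℂ) ^ s * cexp (-a * t)))
    (Eventually.of_forall fun _ => aestronglyMeasurable_cpow_mul_cexp_neg_mul)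
    (integrableOn_cpow_mul_cexp_neg_mul hs ha₀) aestronglyMeasurable_cpow_mul_cexp_neg_mul.neg
    ?_ (integrableOn_rpow_mul_exp_neg_mul (b := s.re) (by linarith) hε) ?_).2.differentiableAt
      |>.differentiableWithinAt
  · filter_upwards [ae_restrict_mem measurableSet_Ioi] with t (ht : 0 < t) a ha
    rw [norm_neg, norm_cpow_mul_cexp_neg_mul ht]
    gcongr
    nlinarith [hre a ha]
  · filter_upwards [ae_restrict_mem measurableSet_Ioi] with t ht a _
    exact hasDerivAt_cpow_mul_cexp_neg_mul ht

lemma integral_cpow_mul_cexp_neg_mul (hs : 0 < s.re) (ha : 0 < a.re) :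
    ∫ t : ℝ in Ioi 0, (t : ℂ) ^ (s - 1) * cexp (-a * t) = a ^ (-s) * Gamma s := by
  have hU : IsOpen {a : ℂ | 0 < a.re} := isOpen_lt continuous_const continuous_re
  have hG : DifferentiableOn ℂ (fun a : ℂ => a ^ (-s) * Gamma s) {a : ℂ | 0 < a.re} :=
    fun a ha => (differentiableAt_id.cpow_const (Or.inl ha)).mul_const _ |>.differentiableWithinAt
  have hreal : ∀ r : ℝ, 0 < r →
      ∫ t : ℝ in Ioi 0, (t : ℂ) ^ (s - 1) * cexp (-r * t) = (r : ℂ) ^ (-s) * Gamma s := by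
    intro r hr
    simp_rw [neg_mul]
    rw [integral_cpow_mul_exp_neg_mul_Ioi hs hr, one_div,
      inv_cpow _ _ (by simpa [arg_ofReal_of_nonneg hr.le] using Real.pi_ne_zero.symm), cpow_neg]
  have hfreq : ∃ᶠ z in 𝓝[≠] (1 : ℂ),
      ∫ t : ℝ in Ioi 0, (t : ℂ) ^ (s - 1) * cexp (-z * t) = z ^ (-s) * Gamma s := by
    have hofReal : Tendsto ((↑) : ℝ → ℂ) (𝓝[≠] 1) (𝓝[≠] 1) := by
      simpa using continuous_ofReal.continuousWithinAt.tendsto_nhdsWithin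
        (x := (1 : ℝ)) (t := {(1 : ℂ)}ᶜ) (fun r hr => by simpa using hr)
    refine hofReal.frequently (Eventually.frequently ?_)
    filter_upwards [eventually_nhdsWithin_of_eventually_nhds (lt_mem_nhds one_pos)] with r hr
    exact hreal r hr
  exact ((differentiableOn_integral_cpow_mul_cexp_neg_mul hs).analyticOnNhd hU)
    |>.eqOn_of_preconnected_of_frequently_eq (hG.analyticOnNhd hU)
      (convex_halfSpace_re_gt 0).isPreconnected (by simp) hfreq ha

lemma mellinConvergent_cexp_neg_mul {s : ℂ} (hs : 0 < s.re) (ha : 0 < a.re) :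
    MellinConvergent (fun t : ℝ => cexp (-a * t)) s :=
  integrableOn_cpow_mul_cexp_neg_mul hs ha

lemma mellin_cexp_neg_mul {s : ℂ} (hs : 0 < s.re) (ha : 0 < a.re) :
    mellin (fun t : ℝ => cexp (-a * t)) s = a ^ (-s) * Gamma s :=
  integral_cpow_mul_cexp_neg_mul hs ha

end GammaIntegral

lemma integrable_fourier_of_integrable_deriv_deriv {E : Type*} [NormedAddCommGroup E]
    [NormedSpace ℂ E] {g : ℝ → E} (hg : Integrable g) (hg_diff : Differentiable ℝ g)
    (hg' : Integrable (deriv g)) (hg'_diff : Differentiable ℝ (deriv g))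
    (hg'' : Integrable (deriv (deriv g))) : Integrable (𝓕 g) := by
  set A := ∫ u, ‖g u‖
  set B := ∫ u, ‖deriv (deriv g) u‖
  -- `𝓕 g` is bounded by `A`, and `(2πw)² 𝓕 g = 𝓕 g''` by `B`: so `𝓕 g = O((1 + |w|)⁻²)`.
  have hbound : ∀ w : ℝ, ‖𝓕 g w‖ ≤ (2 * A + B) * (1 + ‖w‖) ^ (-2 : ℝ) := by
    intro w
    have h0 : ‖𝓕 g w‖ ≤ A := VectorFourier.norm_fourierIntegral_le_integral_norm _ _ _ _ _
    have h2 : (2 * π * |w|) ^ 2 * ‖𝓕 g w‖ ≤ B := by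
      have h : ‖𝓕 (deriv (deriv g)) w‖ ≤ B :=
        VectorFourier.norm_fourierIntegral_le_integral_norm _ _ _ _ _
      rw [Real.fourier_deriv hg' hg'_diff hg'', Real.fourier_deriv hg hg_diff hg'] at h
      convert h using 1
      simp [norm_smul, abs_of_pos Real.pi_pos]
      ring
    have hπ : 2 ≤ (2 * π) ^ 2 := by nlinarith [Real.pi_gt_three]
    rw [Real.rpow_neg (by positivity), Real.rpow_two, ← div_eq_mul_inv,
      le_div_iff₀ (by positivity), Real.norm_eq_abs]
    nlinarith [sq_nonneg (|w| - 1), norm_nonneg (𝓕 g w),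
      mul_le_mul_of_nonneg_right hπ (mul_nonneg (sq_nonneg |w|) (norm_nonneg (𝓕 g w)))]
  refine Integrable.mono' ((integrable_one_add_norm (by norm_num)).const_mul (2 * A + B))
    (VectorFourier.fourierIntegral_continuous Real.continuous_fourierChar continuous_inner
      hg).aestronglyMeasurable (Eventually.of_forall hbound)

lemma integrable_exp_neg_mul_sub_mul_exp_neg {b r : ℝ} (hb : 0 < b) (hr : 0 < r) :
    Integrable (fun u : ℝ => Real.exp (-b * u - r * Real.exp (-u))) := by
  have h := integrableOn_rpow_mul_exp_neg_mul (b := b - 1) (by linarith) hr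
  rw [← Real.range_exp, ← image_univ, integrableOn_image_iff_integrableOn_abs_deriv_smul
    MeasurableSet.univ (fun u _ => (Real.hasDerivAt_exp u).hasDerivWithinAt)
    Real.exp_injective.injOn, integrableOn_univ] at h
  refine h.comp_neg.congr (Eventually.of_forall fun u => ?_)
  simp only [smul_eq_mul, Real.abs_exp, ← Real.exp_mul, ← Real.exp_add]
  ring_nf

/-- The Fourier transform of `expKernel a b` is the Mellin transform of `t ↦ e^{-at}` on the line
`Re s = b` (`mellin_eq_fourier`). -/
noncomputable def expKernel (a : ℂ) (b u : ℝ) : ℂ :=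
  Real.exp (-b * u) • cexp (-a * Real.exp (-u))

section ExpKernel

variable {a : ℂ} {b : ℝ}

lemma norm_expKernel (u : ℝ) :
    ‖expKernel a b u‖ = Real.exp (-b * u - a.re * Real.exp (-u)) := by
  simp [expKernel, Complex.norm_exp, ← Real.exp_add, sub_eq_add_neg, -ofReal_exp]

lemma continuous_expKernel : Continuous (expKernel a b) := by
  unfold expKernel; fun_prop

lemma integrable_expKernel (ha : 0 < a.re) (hb : 0 < b) : Integrable (expKernel a b) :=
  (integrable_exp_neg_mul_sub_mul_exp_neg hb ha).mono' continuous_expKernel.aestronglyMeasurable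
    (Eventually.of_forall fun u => (norm_expKernel u).le)

lemma hasDerivAt_expKernel (u : ℝ) :
    HasDerivAt (expKernel a b) (-b * expKernel a b u + a * expKernel a (b + 1) u) u := by
  have hexp : HasDerivAt (fun u : ℝ => ((Real.exp (-u) : ℝ) : ℂ)) (-Real.exp (-u) : ℝ) u := by
    simpa using ((hasDerivAt_neg u).exp).ofReal_comp
  have h := ((hasDerivAt_id u).const_mul (-b)).exp.smul (hexp.const_mul (-a)).cexp
  refine h.congr_deriv ?_
  simp only [expKernel, id, Real.exp_add, show -(b + 1) * u = -b * u + -u by ring, real_smul]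
  push_cast
  ring

lemma deriv_expKernel :
    deriv (expKernel a b) = fun u => -b * expKernel a b u + a * expKernel a (b + 1) u :=
  funext fun u => hasDerivAt_expKernel u |>.deriv

lemma deriv_deriv_expKernel : deriv (deriv (expKernel a b)) = fun u =>
    b ^ 2 * expKernel a b u - a * (2 * b + 1) * expKernel a (b + 1) u +
      a ^ 2 * expKernel a (b + 2) u := by
  rw [deriv_expKernel]
  refine funext fun u => HasDerivAt.deriv ?_
  refine (((hasDerivAt_expKernel (b := b) u).const_mul (-(b : ℂ))).add
    ((hasDerivAt_expKernel (b := b + 1) u).const_mul a)).congr_deriv ?_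
  rw [show b + 1 + 1 = b + 2 by ring]
  push_cast
  ring

lemma integrable_fourier_expKernel (ha : 0 < a.re) (hb : 0 < b) :
    Integrable (𝓕 (expKernel a b)) := by
  have hint (k : ℝ) (hk : 0 ≤ k) : Integrable (expKernel a (b + k)) :=
    integrable_expKernel ha (by linarith)
  have hdiff (b : ℝ) : Differentiable ℝ (expKernel a b) := fun u =>
    (hasDerivAt_expKernel u).differentiableAt
  have h0 : Integrable (expKernel a b) := integrable_expKernel ha hb
  refine integrable_fourier_of_integrable_deriv_deriv h0 (hdiff b) ?_ ?_ ?_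
  · rw [deriv_expKernel]
    exact (h0.const_mul _).add ((hint 1 zero_le_one).const_mul _)
  · rw [deriv_expKernel]
    exact ((hdiff b).const_mul _).add ((hdiff _).const_mul _)
  · rw [deriv_deriv_expKernel]
    exact ((h0.const_mul _).sub ((hint 1 zero_le_one).const_mul _)).add
      ((hint 2 zero_le_two).const_mul _)

end ExpKernel

section MellinBarnes

variable {a : ℂ} {c : ℝ}

lemma verticalIntegrable_mellin_cexp_neg_mul (ha : 0 < a.re) (hc : 0 < c) :
    VerticalIntegrable (mellin fun t : ℝ => cexp (-a * t)) c := by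
  have h := (integrable_fourier_expKernel ha hc).comp_mul_right'
    (inv_ne_zero (by positivity : 2 * π ≠ 0))
  refine h.congr (Eventually.of_forall fun y => ?_)
  simp only [mellin_eq_fourier, add_re, ofReal_re, mul_re, I_re, I_im, ofReal_im, add_im, mul_im,
    mul_zero, sub_zero, add_zero, zero_add, mul_one, div_eq_mul_inv]
  rfl

lemma integrable_cpow_neg_mul_Gamma (ha : 0 < a.re) (hc : 0 < c) :
    Integrable fun y : ℝ => a ^ (-(c + y * I)) * Gamma (c + y * I) :=
  (verticalIntegrable_mellin_cexp_neg_mul ha hc).congr (Eventually.of_forall fun y =>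
    mellin_cexp_neg_mul (by simpa using hc) ha)

lemma integral_cpow_neg_mul_Gamma (ha : 0 < a.re) (hc : 0 < c) :
    ∫ y : ℝ, a ^ (-(c + y * I)) * Gamma (c + y * I) = 2 * π * cexp (-a) := by
  have h := mellinInv_mellin_eq c _ one_pos (mellinConvergent_cexp_neg_mul (by simpa using hc) ha)
    (verticalIntegrable_mellin_cexp_neg_mul ha hc) (by fun_prop)
  have hmellin (y : ℝ) : mellin (fun t : ℝ => cexp (-a * t)) (c + y * I) =
      a ^ (-(c + y * I)) * Gamma (c + y * I) := mellin_cexp_neg_mul (by simpa using hc) ha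
  simp only [mellinInv, ofReal_one, one_cpow, one_smul, mul_one, hmellin] at h
  rw [← h, real_smul, ← mul_assoc, ← ofReal_ofNat 2, ← ofReal_mul, ← ofReal_mul,
    mul_one_div_cancel (by positivity), ofReal_one, one_mul]

end MellinBarnes

lemma ofReal_mul_cexp_mul_I_cpow {r φ : ℝ} (hr : 0 < r) (hφ : |φ| < π) (w : ℂ) :
    ((r : ℂ) * cexp (φ * I)) ^ w = (r : ℂ) ^ w * cexp (φ * w * I) := by
  have hexp : (r : ℂ) * cexp (φ * I) = cexp (Real.log r + φ * I) := by
    rw [exp_add, ← ofReal_exp, Real.exp_log hr]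
  have him : (Real.log r + φ * I : ℂ).im = φ := by simp
  rw [hexp, cpow_def_of_ne_zero (exp_ne_zero _),
    log_exp (by rw [him]; linarith [abs_lt.1 hφ]) (by rw [him]; linarith [abs_lt.1 hφ]),
    cpow_def_of_ne_zero (ofReal_ne_zero.2 hr.ne'), ← ofReal_log hr.le, ← exp_add]
  ring_nf

lemma re_ofReal_mul_cexp_mul_I_pos {r φ : ℝ} (hr : 0 < r) (hφ : |φ| < π / 2) :
    0 < ((r : ℂ) * cexp (φ * I)).re := by
  rw [re_ofReal_mul, exp_ofReal_mul_I_re]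
  exact mul_pos hr (Real.cos_pos_of_mem_Ioo (abs_lt.1 hφ))

lemma abs_mul_cexp_neg_sign_mul_I {k : ℝ} (hk : 0 < k) (y : ℝ) :
    ((|k * y| : ℝ) : ℂ) * cexp (↑(-(π / 2 * Real.sign y)) * I) = -(k * y * I) := by
  rcases lt_trichotomy y 0 with h | rfl | h
  · rw [Real.sign_of_neg h, abs_of_neg (mul_neg_of_pos_of_neg hk h)]
    push_cast
    rw [mul_neg_one, neg_neg, exp_pi_div_two_mul_I]
    ring
  · simp
  · rw [Real.sign_of_pos h, abs_of_pos (mul_pos hk h)]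
    push_cast
    rw [mul_one, neg_mul, exp_neg, exp_pi_div_two_mul_I, inv_I]
    ring

/-- The Mellin–Barnes representation of `e(x)`: for each `0 < θ < π/2` the contour integral
over `Re(t) = c` converges absolutely, and it tends to `e(x)` as `θ → (π/2)⁻`. -/
theorem statement11 (x : ℝ) (hx : x ≠ 0) (c : ℝ) (hc : 0 < c) :
    (∀ θ : ℝ, 0 < θ → θ < Real.pi / 2 →
      Integrable (fun s : ℝ =>
        ((|2 * Real.pi * x| : ℝ) : ℂ) ^ (-((c : ℂ) + (s : ℂ) * Complex.I)) *
          Complex.exp (Complex.I * ((c : ℂ) + (s : ℂ) * Complex.I) * (θ : ℂ) *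
            ((Real.sign x : ℝ) : ℂ)) *
          Complex.Gamma ((c : ℂ) + (s : ℂ) * Complex.I) * Complex.I)) ∧
    Filter.Tendsto (fun θ : ℝ =>
        (1 / (2 * (Real.pi : ℂ) * Complex.I)) *
          ∫ s : ℝ,
            ((|2 * Real.pi * x| : ℝ) : ℂ) ^ (-((c : ℂ) + (s : ℂ) * Complex.I)) *
              Complex.exp (Complex.I * ((c : ℂ) + (s : ℂ) * Complex.I) * (θ : ℂ) *
                ((Real.sign x : ℝ) : ℂ)) *
              Complex.Gamma ((c : ℂ) + (s : ℂ) * Complex.I) * Complex.I)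
      (nhdsWithin (Real.pi / 2) (Set.Iio (Real.pi / 2))) (nhds (e2pi x)) := by
  have hr : 0 < |2 * π * x| := abs_pos.2 (mul_ne_zero (by positivity) hx)
  set a : ℝ → ℂ := fun θ => ((|2 * π * x| : ℝ) : ℂ) * cexp (↑(-(θ * Real.sign x)) * I)
  have hφ : ∀ θ ∈ Ioo 0 (π / 2), |-(θ * Real.sign x)| < π / 2 := fun θ hθ => by
    rcases Real.sign_apply_eq x with h | h | h <;> simp [h, abs_of_pos hθ.1, hθ.2, Real.pi_pos]
  have hre : ∀ θ ∈ Ioo 0 (π / 2), 0 < (a θ).re := fun θ hθ =>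
    re_ofReal_mul_cexp_mul_I_pos hr (hφ θ hθ)
  have hintegrand : ∀ θ ∈ Ioo 0 (π / 2),
      (fun s : ℝ => ((|2 * π * x| : ℝ) : ℂ) ^ (-((c : ℂ) + s * I)) *
        cexp (I * (c + s * I) * θ * (Real.sign x : ℝ)) * Gamma (c + s * I) * I) =
      fun s : ℝ => a θ ^ (-((c : ℂ) + s * I)) * Gamma (c + s * I) * I := fun θ hθ => by
    ext s
    rw [ofReal_mul_cexp_mul_I_cpow hr (by linarith [hφ θ hθ, Real.pi_pos])]
    push_cast
    ring_nf
  refine ⟨fun θ hθ₀ hθ₁ => ?_, ?_⟩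
  · rw [hintegrand θ ⟨hθ₀, hθ₁⟩]
    exact (integrable_cpow_neg_mul_Gamma (hre θ ⟨hθ₀, hθ₁⟩) hc).mul_const I
  have hend : cexp (-a (π / 2)) = e2pi x := by
    rw [show a (π / 2) = _ from abs_mul_cexp_neg_sign_mul_I (by positivity) x, e2pi]
    push_cast
    ring_nf
  have hlim : Tendsto (fun θ => cexp (-a θ)) (𝓝[<] (π / 2)) (𝓝 (e2pi x)) :=
    hend ▸ ((by fun_prop : Continuous fun θ => cexp (-a θ)).tendsto _).mono_left nhdsWithin_le_nhds
  refine hlim.congr' (eventually_of_mem (Ioo_mem_nhdsLT (by positivity)) fun θ hθ => ?_)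
  dsimp only
  rw [hintegrand θ hθ, integral_mul_const, integral_cpow_neg_mul_Gamma (hre θ hθ) hc]
  field_simp
end

section
/- Let u_1, u_2 be complex numbers with 2Re(u_1) − Re(u_2) < 0 and −Re(u_1) + 2Re(u_2) < 0. Then the integral ∫_{ℝ^3} (1 + x_2^2 + x_3^2)^{(−1 + 2Re(u_1) − Re(u_2))/2} · (1 + x_1^2 + (x_1 x_2 − x_3)^2)^{(−1 − Re(u_1) + 2Re(u_2))/2} dx_1 dx_2 dx_3 is finite; consequently, for all real t_1, t_2 > 0, real β_1, β_2 > 0 and signs v_1, v_2 ∈ {±1}, the integral X'_{w_l}(u, v, β, t) = ∫_{ℝ^3} e( −v_1 (β_1/t_2) x_1^* − v_2 (β_2/t_1) x_2^* + t_1 x_1' + t_2 x_2' ) (y_1^*)^{1−u_1} (y_2^*)^{1−u_2} dx_1' dx_2' dx_3' converges absolutely, uniformly in (β, t). -/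
open MeasureTheory

/-- `x₁*` as a function of `x' = (x₁', x₂', x₃')`. -/
noncomputable def xwl1 (x : ℝ × ℝ × ℝ) : ℝ :=
  -(x.2.1 + x.1 * x.2.2) / (1 + x.2.1 ^ 2 + x.2.2 ^ 2)

/-- `x₂*` as a function of `x' = (x₁', x₂', x₃')`. -/
noncomputable def xwl2 (x : ℝ × ℝ × ℝ) : ℝ :=
  -(x.1 + x.2.1 * (x.1 * x.2.1 - x.2.2)) / (1 + x.1 ^ 2 + (x.1 * x.2.1 - x.2.2) ^ 2)

/-- `y₁*` as a function of `x' = (x₁', x₂', x₃')`. -/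
noncomputable def ywl1 (x : ℝ × ℝ × ℝ) : ℝ :=
  Real.sqrt (1 + x.1 ^ 2 + (x.1 * x.2.1 - x.2.2) ^ 2) / (1 + x.2.1 ^ 2 + x.2.2 ^ 2)

/-- `y₂*` as a function of `x' = (x₁', x₂', x₃')`. -/
noncomputable def ywl2 (x : ℝ × ℝ × ℝ) : ℝ :=
  Real.sqrt (1 + x.2.1 ^ 2 + x.2.2 ^ 2) / (1 + x.1 ^ 2 + (x.1 * x.2.1 - x.2.2) ^ 2)

/-- The integrand of `X'_{w_l}(u, v, β, t)`. -/
noncomputable def XwlF (u₁ u₂ : ℂ) (v₁ v₂ β₁ β₂ t₁ t₂ : ℝ) (x : ℝ × ℝ × ℝ) : ℂ :=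
  e2pi (-(v₁ * (β₁ / t₂) * xwl1 x) - v₂ * (β₂ / t₁) * xwl2 x + t₁ * x.1 + t₂ * x.2.1) *
    ((ywl1 x : ℝ) : ℂ) ^ ((1 : ℂ) - u₁) * ((ywl2 x : ℝ) : ℂ) ^ ((1 : ℂ) - u₂)

/-- The dominating function. -/
noncomputable def XwlG (u₁ u₂ : ℂ) (x : ℝ × ℝ × ℝ) : ℝ :=
  (1 + x.2.1 ^ 2 + x.2.2 ^ 2) ^ ((-1 + 2 * u₁.re - u₂.re) / 2) *
    (1 + x.1 ^ 2 + (x.1 * x.2.1 - x.2.2) ^ 2) ^ ((-1 - u₁.re + 2 * u₂.re) / 2)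

/-!
Since `|e(·)| = 1`, the modulus of the integrand is exactly `B ^ p * A ^ q`, where
`B = 1 + x₂² + x₃²`, `A = 1 + x₁² + (x₁x₂ - x₃)²` and `p, q` are the two exponents of `XwlG`.
Completing the square, `A = (1 + x₂²)(x₁ - c)² + B / (1 + x₂²)`, so integrating out `x₁` leaves
a constant times `B ^ (p + q + 1/2) * (1 + x₂²) ^ (-q - 1)`; integrating out `x₃` then leaves a
constant times `(1 + x₂²) ^ p`. Each one-dimensional integral is of `(1 + s²) ^ r` with
`r < -1/2`, which is exactly what the conditions on `u₁, u₂` guarantee.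
-/

open Real

section Fubini

variable {α β : Type*} [MeasurableSpace α] [MeasurableSpace β] {μ : Measure α} {ν : Measure β}
  [SFinite ν] {f : α × β → ℝ}

theorem integrable_prod_of_nonneg (hf₀ : ∀ z, 0 ≤ f z)
    (hf : AEStronglyMeasurable f (μ.prod ν)) (hfib : ∀ x, Integrable (fun y => f (x, y)) ν)
    (hint : Integrable (fun x => ∫ y, f (x, y) ∂ν) μ) : Integrable f (μ.prod ν) := by
  refine (integrable_prod_iff hf).2 ⟨.of_forall hfib, ?_⟩
  simpa only [Real.norm_of_nonneg (hf₀ _)] using hint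

theorem integrable_prod_of_nonneg' [SFinite μ] (hf₀ : ∀ z, 0 ≤ f z)
    (hf : AEStronglyMeasurable f (μ.prod ν)) (hfib : ∀ y, Integrable (fun x => f (x, y)) μ)
    (hint : Integrable (fun y => ∫ x, f (x, y) ∂μ) ν) : Integrable f (μ.prod ν) := by
  refine (integrable_prod_iff' hf).2 ⟨.of_forall hfib, ?_⟩
  simpa only [Real.norm_of_nonneg (hf₀ _)] using hint

end Fubini

theorem integrable_one_add_sq_rpow {q : ℝ} (hq : q < -(1 / 2)) :
    Integrable (fun s : ℝ => (1 + s ^ 2) ^ q) := by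
  have h : (Module.finrank ℝ ℝ : ℝ) < -2 * q := by
    rw [Module.finrank_self]; push_cast; linarith
  simpa [Real.norm_eq_abs, sq_abs] using integrable_rpow_neg_one_add_norm_sq (E := ℝ) h

section Quadratic

variable {l m : ℝ}

theorem mul_sub_sq_add_rpow_eq (hl : 0 < l) (hm : 0 < m) (q c x : ℝ) :
    (l * (x - c) ^ 2 + m) ^ q = m ^ q * (1 + (√(l / m) * (x - c)) ^ 2) ^ q := by
  rw [← mul_rpow hm.le (by positivity), mul_pow, sq_sqrt (div_pos hl hm).le]
  congr 1
  field_simp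
  ring

theorem integrable_mul_sub_sq_add_rpow (hl : 0 < l) (hm : 0 < m) {q : ℝ} (hq : q < -(1 / 2))
    (c : ℝ) :
    Integrable (fun x : ℝ => (l * (x - c) ^ 2 + m) ^ q) := by
  have hk : √(l / m) ≠ 0 := (sqrt_pos.2 (div_pos hl hm)).ne'
  simp_rw [mul_sub_sq_add_rpow_eq hl hm]
  exact (((integrable_one_add_sq_rpow hq).comp_mul_left' hk).comp_sub_right c).const_mul _

theorem integral_mul_sub_sq_add_rpow (hl : 0 < l) (hm : 0 < m) (q c : ℝ) :
    ∫ x : ℝ, (l * (x - c) ^ 2 + m) ^ q =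
      m ^ (q + 1 / 2) * l ^ (-(1 / 2) : ℝ) * ∫ s : ℝ, (1 + s ^ 2) ^ q := by
  have hk : 0 < √(l / m) := sqrt_pos.2 (div_pos hl hm)
  simp_rw [mul_sub_sq_add_rpow_eq hl hm, integral_const_mul]
  rw [integral_sub_right_eq_self (fun x => (1 + (√(l / m) * x) ^ 2) ^ q) c,
    Measure.integral_comp_mul_left (fun s => (1 + s ^ 2) ^ q), abs_of_pos (inv_pos.2 hk),
    smul_eq_mul, ← mul_assoc, ← sqrt_inv, inv_div, sqrt_eq_rpow, div_rpow hm.le hl.le,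
    rpow_add hm, div_eq_mul_inv, ← rpow_neg hl.le]
  ring

end Quadratic

theorem integral_one_add_sq_add_sq_rpow (r a : ℝ) :
    ∫ s : ℝ, (1 + a ^ 2 + s ^ 2) ^ r = (1 + a ^ 2) ^ (r + 1 / 2) * ∫ s : ℝ, (1 + s ^ 2) ^ r := by
  have h := integral_mul_sub_sq_add_rpow one_pos (by positivity : 0 < 1 + a ^ 2) r 0
  simpa [add_comm] using h

theorem integrable_one_add_sq_add_sq_rpow {r : ℝ} (hr : r < -(1 / 2)) (a : ℝ) :
    Integrable (fun s : ℝ => (1 + a ^ 2 + s ^ 2) ^ r) := by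
  have h := integrable_mul_sub_sq_add_rpow one_pos (by positivity : 0 < 1 + a ^ 2) hr 0
  simpa [add_comm] using h

theorem integrable_one_add_sq_add_sq_rpow_mul_rpow {r s : ℝ} (hr : r < -(1 / 2))
    (hrs : r + s + 1 / 2 < -(1 / 2)) :
    Integrable (fun y : ℝ × ℝ => (1 + y.1 ^ 2 + y.2 ^ 2) ^ r * (1 + y.1 ^ 2) ^ s) := by
  refine integrable_prod_of_nonneg (fun y => by positivity) (by fun_prop)
    (fun a => (integrable_one_add_sq_add_sq_rpow hr a).mul_const ((1 + a ^ 2) ^ s)) ?_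
  have h : ∀ a : ℝ, ∫ b, (1 + a ^ 2 + b ^ 2) ^ r * (1 + a ^ 2) ^ s =
      (1 + a ^ 2) ^ (r + s + 1 / 2) * ∫ t : ℝ, (1 + t ^ 2) ^ r := fun a => by
    rw [integral_mul_const, integral_one_add_sq_add_sq_rpow, mul_right_comm,
      ← rpow_add (by positivity), add_right_comm]
  simp_rw [h]
  exact (integrable_one_add_sq_rpow hrs).mul_const _

theorem one_add_sq_add_mul_sub_sq_eq (x a b : ℝ) :
    1 + x ^ 2 + (x * a - b) ^ 2 =
      (1 + a ^ 2) * (x - a * b / (1 + a ^ 2)) ^ 2 + (1 + a ^ 2 + b ^ 2) / (1 + a ^ 2) := by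
  field_simp
  ring

theorem integrable_one_add_sq_add_mul_sub_sq_rpow {q : ℝ} (hq : q < -(1 / 2)) (a b : ℝ) :
    Integrable (fun x : ℝ => (1 + x ^ 2 + (x * a - b) ^ 2) ^ q) := by
  simp_rw [one_add_sq_add_mul_sub_sq_eq _ a b]
  exact integrable_mul_sub_sq_add_rpow (by positivity) (by positivity) hq _

theorem integral_one_add_sq_add_mul_sub_sq_rpow (q a b : ℝ) :
    ∫ x : ℝ, (1 + x ^ 2 + (x * a - b) ^ 2) ^ q =
      (1 + a ^ 2 + b ^ 2) ^ (q + 1 / 2) * (1 + a ^ 2) ^ (-q - 1) * ∫ s : ℝ, (1 + s ^ 2) ^ q := by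
  have ha : 0 < 1 + a ^ 2 := by positivity
  have hab : 0 < 1 + a ^ 2 + b ^ 2 := by positivity
  simp_rw [one_add_sq_add_mul_sub_sq_eq _ a b]
  rw [integral_mul_sub_sq_add_rpow ha (div_pos hab ha), div_rpow hab.le ha.le, div_eq_mul_inv,
    ← rpow_neg ha.le, show -q - 1 = -(q + 1 / 2) + -(1 / 2) by ring, rpow_add ha]
  ring

theorem integrable_XwlG_of_exponents {p q : ℝ} (hp : p < -(1 / 2)) (hq : q < -(1 / 2))
    (hpq : p + q + 1 / 2 < -(1 / 2)) :
    Integrable (fun x : ℝ × ℝ × ℝ =>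
      (1 + x.2.1 ^ 2 + x.2.2 ^ 2) ^ p * (1 + x.1 ^ 2 + (x.1 * x.2.1 - x.2.2) ^ 2) ^ q) := by
  refine integrable_prod_of_nonneg' (fun x => by positivity) (by fun_prop)
    (fun y => (integrable_one_add_sq_add_mul_sub_sq_rpow hq y.1 y.2).const_mul
      ((1 + y.1 ^ 2 + y.2 ^ 2) ^ p)) ?_
  have h : ∀ y : ℝ × ℝ, ∫ x, (1 + y.1 ^ 2 + y.2 ^ 2) ^ p * (1 + x ^ 2 + (x * y.1 - y.2) ^ 2) ^ q =
      (1 + y.1 ^ 2 + y.2 ^ 2) ^ (p + q + 1 / 2) * (1 + y.1 ^ 2) ^ (-q - 1) *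
        ∫ s : ℝ, (1 + s ^ 2) ^ q := fun y => by
    rw [integral_const_mul, integral_one_add_sq_add_mul_sub_sq_rpow, ← mul_assoc, ← mul_assoc,
      ← rpow_add (by positivity), ← add_assoc p]
  simp_rw [h]
  exact (integrable_one_add_sq_add_sq_rpow_mul_rpow hpq (by linarith)).mul_const _

theorem norm_e2pi (t : ℝ) : ‖e2pi t‖ = 1 := by
  rw [e2pi, show 2 * π * Complex.I * t = ((2 * π * t : ℝ) : ℂ) * Complex.I by push_cast; ring]
  exact Complex.norm_exp_ofReal_mul_I _

theorem norm_ofReal_sqrt_div_cpow {A B : ℝ} (hA : 0 < A) (hB : 0 < B) (w : ℂ) :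
    ‖((√A / B : ℝ) : ℂ) ^ w‖ = A ^ (w.re / 2) * B ^ (-w.re) := by
  rw [Complex.norm_cpow_eq_rpow_re_of_pos (div_pos (sqrt_pos.2 hA) hB),
    div_rpow (sqrt_nonneg A) hB.le, sqrt_eq_rpow, ← rpow_mul hA.le, div_eq_mul_inv, rpow_neg hB.le]
  ring_nf

theorem norm_XwlF (u₁ u₂ : ℂ) (v₁ v₂ β₁ β₂ t₁ t₂ : ℝ) (x : ℝ × ℝ × ℝ) :
    ‖XwlF u₁ u₂ v₁ v₂ β₁ β₂ t₁ t₂ x‖ = XwlG u₁ u₂ x := by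
  have hA : 0 < 1 + x.1 ^ 2 + (x.1 * x.2.1 - x.2.2) ^ 2 := by positivity
  have hB : 0 < 1 + x.2.1 ^ 2 + x.2.2 ^ 2 := by positivity
  rw [XwlF, XwlG, norm_mul, norm_mul, norm_e2pi, one_mul, ywl1, ywl2,
    norm_ofReal_sqrt_div_cpow hA hB, norm_ofReal_sqrt_div_cpow hB hA, Complex.sub_re,
    Complex.sub_re, Complex.one_re,
    show (-1 + 2 * u₁.re - u₂.re) / 2 = (1 - u₂.re) / 2 + -(1 - u₁.re) by ring,
    show (-1 - u₁.re + 2 * u₂.re) / 2 = (1 - u₁.re) / 2 + -(1 - u₂.re) by ring,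
    rpow_add hA, rpow_add hB]
  ring

theorem measurable_XwlF (u₁ u₂ : ℂ) (v₁ v₂ β₁ β₂ t₁ t₂ : ℝ) :
    Measurable (XwlF u₁ u₂ v₁ v₂ β₁ β₂ t₁ t₂) := by
  unfold XwlF e2pi xwl1 xwl2 ywl1 ywl2
  fun_prop

theorem integrable_XwlG (u₁ u₂ : ℂ) (h1 : 2 * u₁.re - u₂.re < 0) (h2 : -u₁.re + 2 * u₂.re < 0) :
    Integrable (XwlG u₁ u₂) :=
  integrable_XwlG_of_exponents (by linarith) (by linarith) (by linarith)

/-- Absolute convergence of `X'_{w_l}`, uniformly in `(β,t)`, for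
`2 Re u₁ − Re u₂ < 0` and `−Re u₁ + 2 Re u₂ < 0`. -/
theorem statement16 (u₁ u₂ : ℂ) (h1 : 2 * u₁.re - u₂.re < 0) (h2 : -u₁.re + 2 * u₂.re < 0) :
    Integrable (XwlG u₁ u₂) ∧
      ∀ v₁ v₂ : ℝ, (v₁ = 1 ∨ v₁ = -1) → (v₂ = 1 ∨ v₂ = -1) →
        ∀ β₁ β₂ t₁ t₂ : ℝ, 0 < β₁ → 0 < β₂ → 0 < t₁ → 0 < t₂ →
          Integrable (XwlF u₁ u₂ v₁ v₂ β₁ β₂ t₁ t₂) ∧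
            ∀ x : ℝ × ℝ × ℝ, ‖XwlF u₁ u₂ v₁ v₂ β₁ β₂ t₁ t₂ x‖ ≤ XwlG u₁ u₂ x := by
  have hG := integrable_XwlG u₁ u₂ h1 h2
  refine ⟨hG, fun v₁ v₂ _ _ β₁ β₂ t₁ t₂ _ _ _ _ => ⟨?_, fun x => (norm_XwlF ..).le⟩⟩
  exact hG.mono' (measurable_XwlF ..).aestronglyMeasurable (.of_forall fun x => (norm_XwlF ..).le)
end

section
/- Fix p > 1 and complex numbers s_1, s_2 with Re(s_1) < −1/(2p) and Re(s_2) < −(p−1)/(2p). Then there is a constant C = C(s_1, s_2, p) such that for all real x_1, x_2, the integral X_3(x_1, x_2) = ∫_ℝ (1 + x_1^2 + x_3^2)^{s_1} (1 + x_2^2 + (x_3 − x_1 x_2)^2)^{s_2} dx_3 converges absolutely and satisfies |X_3(x_1,x_2)| ≤ C (1 + x_1^2)^{Re(s_1) + 1/(2p)} (1 + x_2^2)^{Re(s_2) + (p−1)/(2p)}. -/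
/-!
Hölder's inequality with exponents `p` and `q = p / (p - 1)` bounds `|X₃(x₁, x₂)|` by the
product of the `L^p` norm of `(1 + x₁² + x₃²) ^ Re s₁` and the `L^q` norm of
`(1 + x₂² + (x₃ - x₁x₂)²) ^ Re s₂`. Both are `L^p` norms of `x ↦ (B + (x - c)²) ^ r`, and the
substitution `x = c + √B u` shows that such a norm is `B ^ (r + 1 / (2p))` times a constant,
finite precisely when `p r < -1/2`.
-/

open MeasureTheory Real

lemma integrable_one_add_sq_rpow_s18 {r : ℝ} (hr : r < -(1 / 2)) :
    Integrable (fun u : ℝ => (1 + u ^ 2) ^ r) := by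
  have h := integrable_rpow_neg_one_add_norm_sq (E := ℝ) (μ := volume) (r := -2 * r)
    (by simp only [Module.finrank_self, Nat.cast_one]; linarith)
  convert h using 3 with u
  · rw [norm_eq_abs, sq_abs]
  · ring

lemma add_sub_sq_rpow_eq {B : ℝ} (hB : 0 < B) (r c t : ℝ) :
    (B + (t - c) ^ 2) ^ r = B ^ r * (1 + ((t - c) / √B) ^ 2) ^ r := by
  have hsplit : B + (t - c) ^ 2 = B * (1 + ((t - c) / √B) ^ 2) := by
    rw [div_pow, sq_sqrt hB.le]
    field_simp
  rw [hsplit, mul_rpow hB.le (by positivity)]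

lemma integrable_add_sub_sq_rpow {r B : ℝ} (hr : r < -(1 / 2)) (hB : 0 < B) (c : ℝ) :
    Integrable (fun t : ℝ => (B + (t - c) ^ 2) ^ r) := by
  simp_rw [add_sub_sq_rpow_eq hB]
  exact (((integrable_one_add_sq_rpow_s18 hr).comp_div (sqrt_pos.2 hB).ne').comp_sub_right c).const_mul
    _

lemma integral_add_sub_sq_rpow {B : ℝ} (hB : 0 < B) (r c : ℝ) :
    ∫ t : ℝ, (B + (t - c) ^ 2) ^ r = B ^ (r + 1 / 2) * ∫ u : ℝ, (1 + u ^ 2) ^ r := by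
  simp_rw [add_sub_sq_rpow_eq hB]
  rw [integral_const_mul, integral_sub_right_eq_self (fun t => (1 + (t / √B) ^ 2) ^ r) c,
    Measure.integral_comp_div (fun u => (1 + u ^ 2) ^ r), abs_of_pos (sqrt_pos.2 hB),
    smul_eq_mul, ← mul_assoc, rpow_add hB, sqrt_eq_rpow]

lemma memLp_add_sub_sq_rpow {p r B : ℝ} (hp : 0 < p) (hr : p * r < -(1 / 2)) (hB : 0 < B)
    (c : ℝ) : MemLp (fun t : ℝ => (B + (t - c) ^ 2) ^ r) (ENNReal.ofReal p) := by
  rw [← integrable_norm_rpow_iff (Measurable.aestronglyMeasurable (by fun_prop))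
    (by simpa using hp) ENNReal.ofReal_ne_top,
    ENNReal.toReal_ofReal hp.le]
  refine (integrable_add_sub_sq_rpow hr hB c).congr (.of_forall fun t => ?_)
  dsimp only
  rw [norm_of_nonneg (by positivity), ← rpow_mul (by positivity), mul_comm]

lemma integral_add_sub_sq_rpow_rpow_one_div {p B : ℝ} (hp : 0 < p) (hB : 0 < B) (r c : ℝ) :
    (∫ t : ℝ, ((B + (t - c) ^ 2) ^ r) ^ p) ^ (1 / p) =
      B ^ (r + 1 / (2 * p)) * (∫ u : ℝ, (1 + u ^ 2) ^ (p * r)) ^ (1 / p) := by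
  have hI : 0 ≤ ∫ u : ℝ, (1 + u ^ 2) ^ (p * r) := integral_nonneg fun u => by positivity
  have hpow (t : ℝ) : ((B + (t - c) ^ 2) ^ r) ^ p = (B + (t - c) ^ 2) ^ (p * r) := by
    rw [← rpow_mul (by positivity), mul_comm]
  simp_rw [hpow]
  rw [integral_add_sub_sq_rpow hB, mul_rpow (by positivity) hI, ← rpow_mul hB.le]
  congr 2
  field_simp

theorem integrable_and_norm_integral_le_of_norm_le_mul {α E : Type*} [MeasurableSpace α]
    {μ : Measure α} [NormedAddCommGroup E] [NormedSpace ℝ E] {p q : ℝ} (hpq : p.HolderConjugate q)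
    {f : α → E} {g h : α → ℝ} (hf : AEStronglyMeasurable f μ) (hfgh : ∀ x, ‖f x‖ ≤ g x * h x)
    (hg₀ : ∀ x, 0 ≤ g x) (hh₀ : ∀ x, 0 ≤ h x)
    (hg : MemLp g (ENNReal.ofReal p) μ) (hh : MemLp h (ENNReal.ofReal q) μ) :
    Integrable f μ ∧
      ‖∫ x, f x ∂μ‖ ≤ (∫ x, g x ^ p ∂μ) ^ (1 / p) * (∫ x, h x ^ q ∂μ) ^ (1 / q) := by
  have := hpq.ennrealOfReal
  have hgh : Integrable (g * h) μ := hg.integrable_mul hh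
  refine ⟨hgh.mono' hf (.of_forall hfgh), ?_⟩
  calc ‖∫ x, f x ∂μ‖ ≤ ∫ x, g x * h x ∂μ :=
        norm_integral_le_of_norm_le hgh (.of_forall hfgh)
    _ ≤ _ := integral_mul_le_Lp_mul_Lq_of_nonneg hpq (.of_forall hg₀) (.of_forall hh₀) hg hh

/-- Hölder-type bound for the integral `X₃(x₁,x₂)`. -/
theorem statement18 (p : ℝ) (hp : 1 < p) (s₁ s₂ : ℂ)
    (h1 : s₁.re < -(1 / (2 * p))) (h2 : s₂.re < -((p - 1) / (2 * p))) :
    ∃ C : ℝ, ∀ x₁ x₂ : ℝ,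
      Integrable (fun x₃ : ℝ =>
          ((1 + x₁ ^ 2 + x₃ ^ 2 : ℝ) : ℂ) ^ s₁ *
            ((1 + x₂ ^ 2 + (x₃ - x₁ * x₂) ^ 2 : ℝ) : ℂ) ^ s₂) ∧
        ‖(∫ x₃ : ℝ,
            ((1 + x₁ ^ 2 + x₃ ^ 2 : ℝ) : ℂ) ^ s₁ *
              ((1 + x₂ ^ 2 + (x₃ - x₁ * x₂) ^ 2 : ℝ) : ℂ) ^ s₂)‖ ≤
          C * (1 + x₁ ^ 2) ^ (s₁.re + 1 / (2 * p)) *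
            (1 + x₂ ^ 2) ^ (s₂.re + (p - 1) / (2 * p)) := by
  obtain ⟨q, hpq⟩ : ∃ q, p.HolderConjugate q := ⟨_, .conjExponent hp⟩
  have hp₀ : 0 < p := hpq.pos
  have hq₀ : 0 < q := hpq.symm.pos
  have hinvq : 1 / (2 * q) = (p - 1) / (2 * p) := by
    rw [hpq.conjugate_eq]; field_simp [hpq.sub_one_ne_zero]
  have hr₁ : p * s₁.re < -(1 / 2) := by
    have := mul_lt_mul_of_pos_left h1 hp₀; field_simp at this ⊢; linarith
  have hr₂ : q * s₂.re < -(1 / 2) := by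
    have := mul_lt_mul_of_pos_left h2 hq₀; rw [← hinvq] at this; field_simp at this ⊢; linarith
  refine ⟨(∫ u : ℝ, (1 + u ^ 2) ^ (p * s₁.re)) ^ (1 / p) *
    (∫ u : ℝ, (1 + u ^ 2) ^ (q * s₂.re)) ^ (1 / q), fun x₁ x₂ => ?_⟩
  have hB₁ : 0 < 1 + x₁ ^ 2 := by positivity
  have hB₂ : 0 < 1 + x₂ ^ 2 := by positivity
  have holder := integrable_and_norm_integral_le_of_norm_le_mul hpq (μ := volume)
    (g := fun t => (1 + x₁ ^ 2 + (t - 0) ^ 2) ^ s₁.re)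
    (h := fun t => (1 + x₂ ^ 2 + (t - x₁ * x₂) ^ 2) ^ s₂.re)
    (f := fun t => ((1 + x₁ ^ 2 + t ^ 2 : ℝ) : ℂ) ^ s₁ *
            ((1 + x₂ ^ 2 + (t - x₁ * x₂) ^ 2 : ℝ) : ℂ) ^ s₂)
    (by fun_prop) (fun t => ?_) (fun t => by positivity) (fun t => by positivity)
    (memLp_add_sub_sq_rpow hp₀ hr₁ hB₁ 0) (memLp_add_sub_sq_rpow hq₀ hr₂ hB₂ _)
  · refine ⟨holder.1, holder.2.trans_eq ?_⟩
    rw [integral_add_sub_sq_rpow_rpow_one_div hp₀ hB₁,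
      integral_add_sub_sq_rpow_rpow_one_div hq₀ hB₂, hinvq]
    ring
  · rw [norm_mul, Complex.norm_cpow_eq_rpow_re_of_pos (by positivity),
      Complex.norm_cpow_eq_rpow_re_of_pos (by positivity), sub_zero]
end
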